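/- arXiv:2106.05608 — 7 statements merged into one kernel-verified Lean document; each statement's English description precedes it below -/
import Mathlib

section
/- Let d ≥ 1, let Σ be a d×d real symmetric positive definite matrix, and let X be a random vector in ℝ^d distributed according to the multivariate Gaussian N(0, Σ). Then for every ε ≥ 0, E[‖X‖_{Σ⁻¹} · 1{‖X‖_{Σ⁻¹} ≥ ε}] ≤ (2/√(2π)) · d^{3/2} · exp(−ε²/(2d)). -/
open MeasureTheory ProbabilityTheory Matrix

noncomputable def gtail (t : ℝ) : ℝ → ℝ := Set.indicator {y : ℝ | t ≤ |y|} (fun y => |y|)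

lemma gtail_nonneg (t x : ℝ) : 0 ≤ gtail t x :=
  Set.indicator_nonneg (fun y _ => abs_nonneg y) x

lemma gtail_le_abs (t x : ℝ) : gtail t x ≤ |x| := by
  unfold gtail
  by_cases h : x ∈ {y : ℝ | t ≤ |y|}
  · rw [Set.indicator_of_mem h]
  · rw [Set.indicator_of_notMem h]; exact abs_nonneg x

lemma gtail_measurableSet (t : ℝ) : MeasurableSet {y : ℝ | t ≤ |y|} :=
  measurableSet_le measurable_const measurable_id.abs

lemma gtail_measurable (t : ℝ) : Measurable (gtail t) :=
  (measurable_id.abs).indicator (gtail_measurableSet t)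

lemma integrable_id_mul_exp : Integrable (fun x : ℝ => x * Real.exp (-x ^ 2 / 2)) := by
  have h := integrable_rpow_mul_exp_neg_mul_sq (show (0:ℝ) < 1/2 by norm_num)
    (show (-1:ℝ) < 1 by norm_num)
  exact h.congr (Filter.Eventually.of_forall fun x => by
    show x ^ (1:ℝ) * Real.exp (-(1/2) * x ^ 2) = x * Real.exp (-x ^ 2 / 2)
    rw [Real.rpow_one, show -(1/2 : ℝ) * x ^ 2 = -x ^ 2 / 2 by ring])

lemma integral_Ioi_mul_exp (t : ℝ) :
    ∫ x in Set.Ioi t, x * Real.exp (-x ^ 2 / 2) = Real.exp (-t ^ 2 / 2) := by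
  have hderiv : ∀ x ∈ Set.Ioi t,
      HasDerivAt (fun y : ℝ => -Real.exp (-y ^ 2 / 2)) (x * Real.exp (-x ^ 2 / 2)) x := by
    intro x _
    have h1 : HasDerivAt (fun y : ℝ => -y ^ 2 / 2) (-x) x := by
      have := ((hasDerivAt_pow 2 x).neg).div_const 2
      simpa using this.congr_deriv (by ring)
    have h2 := h1.exp
    have h3 := h2.neg
    exact h3.congr_deriv (by ring)
  have htend : Filter.Tendsto (fun y : ℝ => -Real.exp (-y ^ 2 / 2)) Filter.atTop (nhds 0) := by
    rw [show (0:ℝ) = -0 by ring]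
    refine Filter.Tendsto.neg ?_
    refine Real.tendsto_exp_atBot.comp ?_
    have h1 : Filter.Tendsto (fun y : ℝ => y ^ 2) Filter.atTop Filter.atTop :=
      Filter.tendsto_pow_atTop (by norm_num)
    have h2 : Filter.Tendsto (fun y : ℝ => -y ^ 2) Filter.atTop Filter.atBot :=
      Filter.tendsto_neg_atTop_atBot.comp h1
    exact h2.atBot_div_const (by norm_num)
  have hcont : ContinuousWithinAt (fun y : ℝ => -Real.exp (-y ^ 2 / 2)) (Set.Ici t) t :=
    Continuous.continuousWithinAt (by continuity)
  have := integral_Ioi_of_hasDerivAt_of_tendsto hcont hderiv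
    (integrable_id_mul_exp.integrableOn) htend
  rw [this]; ring

lemma integral_gtail_mul_exp {t : ℝ} (ht : 0 ≤ t) :
    ∫ x, gtail t x * Real.exp (-x ^ 2 / 2) = 2 * Real.exp (-t ^ 2 / 2) := by
  have hfun : (fun x => gtail t x * Real.exp (-x ^ 2 / 2)) =
      (fun x => Set.indicator (Set.Ici t) (fun y => y * Real.exp (-y ^ 2 / 2)) x
        + Set.indicator (Set.Iic (-t)) (fun y => -y * Real.exp (-y ^ 2 / 2)) x) := by
    funext x
    simp only [gtail, Set.indicator_apply, Set.mem_setOf_eq, Set.mem_Ici, Set.mem_Iic]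
    rcases lt_trichotomy x 0 with hx | hx | hx
    · simp only [abs_of_neg hx]
      have hnot : ¬ t ≤ x := by linarith
      by_cases h : t ≤ -x
      · have h2 : x ≤ -t := by linarith
        simp only [h, if_pos, h2, hnot, if_false, if_true]; ring
      · have h2 : ¬ x ≤ -t := by linarith
        simp [h, h2, hnot]
    · subst hx
      rcases eq_or_lt_of_le ht with h0 | h0
      · simp [← h0]
      · have h1 : ¬ t ≤ |(0:ℝ)| := by simpa using h0
        have h2 : ¬ t ≤ (0:ℝ) := by simpa using h0
        have h3 : ¬ (0:ℝ) ≤ -t := by linarith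
        simp [h1, h2, h3]
    · simp only [abs_of_pos hx]
      have hnot : ¬ x ≤ -t := by linarith
      by_cases h : t ≤ x
      · simp only [h, if_pos, hnot, if_false, if_true]; ring
      · simp [h, hnot]
  rw [hfun]
  have int1 : Integrable ((Set.Ici t).indicator fun y => y * Real.exp (-y ^ 2 / 2)) :=
    integrable_id_mul_exp.indicator measurableSet_Ici
  have hneg : Integrable (fun y : ℝ => -y * Real.exp (-y ^ 2 / 2)) := by
    have := integrable_id_mul_exp.neg
    exact this.congr (Filter.Eventually.of_forall fun x => by
      simp only [Pi.neg_apply]; ring)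
  have int2 : Integrable ((Set.Iic (-t)).indicator fun y => -y * Real.exp (-y ^ 2 / 2)) :=
    hneg.indicator measurableSet_Iic
  rw [integral_add int1 int2, integral_indicator measurableSet_Ici,
    integral_indicator measurableSet_Iic]
  have e1 : ∫ x in Set.Ici t, x * Real.exp (-x ^ 2 / 2) = Real.exp (-t ^ 2 / 2) := by
    rw [MeasureTheory.integral_Ici_eq_integral_Ioi, integral_Ioi_mul_exp]
  have e2 : ∫ x in Set.Iic (-t), -x * Real.exp (-x ^ 2 / 2) = Real.exp (-t ^ 2 / 2) := by
    have hx : (fun x : ℝ => -x * Real.exp (-x ^ 2 / 2))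
        = fun x : ℝ => (fun y : ℝ => y * Real.exp (-y ^ 2 / 2)) (-x) := by
      funext x; simp [neg_sq]
    have h := integral_comp_neg_Iic (-t) (fun y : ℝ => y * Real.exp (-y ^ 2 / 2))
    rw [hx, h, neg_neg, integral_Ioi_mul_exp]
  rw [e1, e2]
  try ring_nf

lemma gaussianPDFReal_zero_one (x : ℝ) :
    gaussianPDFReal 0 1 x = (Real.sqrt (2 * Real.pi))⁻¹ * Real.exp (-x ^ 2 / 2) := by
  simp [gaussianPDFReal]
  try norm_num

lemma gaussianReal_eq_withDensity :
    gaussianReal 0 1 = volume.withDensity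
      (fun x => ((gaussianPDFReal 0 1 x).toNNReal : ENNReal)) := by
  rw [gaussianReal_of_var_ne_zero 0 one_ne_zero]
  rfl

lemma integrable_gtail (t : ℝ) : Integrable (gtail t) (gaussianReal 0 1) := by
  rw [gaussianReal_eq_withDensity]
  rw [integrable_withDensity_iff_integrable_smul
    ((measurable_gaussianPDFReal 0 1).real_toNNReal)]
  refine Integrable.mono' (g := fun x => (Real.sqrt (2 * Real.pi))⁻¹ * (|x| * Real.exp (-x ^ 2 / 2)))
    ?_ ?_ ?_
  · exact (integrable_id_mul_exp.abs.congr (Filter.Eventually.of_forall fun x => by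
      simp [abs_mul, abs_of_nonneg (Real.exp_pos _).le])).const_mul _
  · exact (((measurable_gaussianPDFReal 0 1).real_toNNReal).smul
      (gtail_measurable t)).aestronglyMeasurable
  · filter_upwards with x
    have h0 : (0:ℝ) ≤ gaussianPDFReal 0 1 x := gaussianPDFReal_nonneg 0 1 x
    have : ((gaussianPDFReal 0 1 x).toNNReal : ℝ) • gtail t x
        = gaussianPDFReal 0 1 x * gtail t x := by
      simp [Real.coe_toNNReal _ h0]
    rw [NNReal.smul_def, this, Real.norm_eq_abs,
      abs_of_nonneg (mul_nonneg h0 (gtail_nonneg t x)), gaussianPDFReal_zero_one]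
    have h1 : gtail t x ≤ |x| := gtail_le_abs t x
    have h2 : (0:ℝ) < Real.sqrt (2 * Real.pi) := Real.sqrt_pos.mpr (by positivity)
    calc (Real.sqrt (2 * Real.pi))⁻¹ * Real.exp (-x ^ 2 / 2) * gtail t x
        ≤ (Real.sqrt (2 * Real.pi))⁻¹ * Real.exp (-x ^ 2 / 2) * |x| := by
          apply mul_le_mul_of_nonneg_left h1 (by positivity)
      _ = (Real.sqrt (2 * Real.pi))⁻¹ * (|x| * Real.exp (-x ^ 2 / 2)) := by ring

lemma integral_gtail {t : ℝ} (ht : 0 ≤ t) :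
    ∫ x, gtail t x ∂(gaussianReal 0 1)
      = 2 / Real.sqrt (2 * Real.pi) * Real.exp (-t ^ 2 / 2) := by
  rw [gaussianReal_eq_withDensity]
  rw [integral_withDensity_eq_integral_smul ((measurable_gaussianPDFReal 0 1).real_toNNReal)]
  have : (fun x => ((gaussianPDFReal 0 1 x).toNNReal) • gtail t x)
      = fun x => (Real.sqrt (2 * Real.pi))⁻¹ * (gtail t x * Real.exp (-x ^ 2 / 2)) := by
    funext x
    rw [NNReal.smul_def, Real.coe_toNNReal _ (gaussianPDFReal_nonneg 0 1 x),
      gaussianPDFReal_zero_one, smul_eq_mul]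
    ring
  rw [this, integral_const_mul, integral_gtail_mul_exp ht]
  ring

lemma pi_map_eval {d : ℕ} (i : Fin d) :
    (Measure.pi fun _ : Fin d => gaussianReal 0 1).map (Function.eval i) = gaussianReal 0 1 := by
  refine Measure.ext fun s hs => ?_
  rw [Measure.map_apply (measurable_pi_apply i) hs, Set.eval_preimage, Measure.pi_pi]
  rw [Finset.prod_eq_single i (fun j _ hj => by
    rw [Function.update_of_ne hj]; exact measure_univ) (by simp)]
  rw [Function.update_self]

/-- Let `d ≥ 1`, `Σ` a `d×d` symmetric positive definite matrix, and `X ~ N(0, Σ)`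
(realized as `X = A Z` where `Z ~ N(0, I_d)` and `A Aᵀ = Σ`). Then for every `ε ≥ 0`,
`E[‖X‖_{Σ⁻¹} · 1{‖X‖_{Σ⁻¹} ≥ ε}] ≤ (2/√(2π)) · d^{3/2} · exp(−ε²/(2d))`. -/
theorem gaussian_mahalanobis_tail_bound {d : ℕ} (hd : 1 ≤ d)
    (S A : Matrix (Fin d) (Fin d) ℝ) (hS : S.PosDef) (hA : A * Aᵀ = S)
    (ε : ℝ) (hε : 0 ≤ ε) :
    ∫ x in {x : Fin d → ℝ | ε ≤ Real.sqrt (x ⬝ᵥ S⁻¹.mulVec x)},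
        Real.sqrt (x ⬝ᵥ S⁻¹.mulVec x)
        ∂((Measure.pi fun _ : Fin d => gaussianReal 0 1).map A.mulVec) ≤
      2 / Real.sqrt (2 * Real.pi) * (d : ℝ) ^ ((3 : ℝ) / 2) *
        Real.exp (-ε ^ 2 / (2 * d)) := by
  classical
  set π₀ : Measure (Fin d → ℝ) := Measure.pi fun _ : Fin d => gaussianReal 0 1 with hπ₀
  have hd0 : (0:ℝ) < d := by exact_mod_cast hd
  have hsd : (0:ℝ) < Real.sqrt d := Real.sqrt_pos.mpr hd0
  set t : ℝ := ε / Real.sqrt d with htdef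
  have ht : 0 ≤ t := div_nonneg hε hsd.le
  -- matrix algebra
  have hdetA : IsUnit A.det := by
    have hdS : 0 < S.det := hS.det_pos
    rw [← hA, Matrix.det_mul, Matrix.det_transpose] at hdS
    exact isUnit_iff_ne_zero.mpr fun h => by simp [h] at hdS
  have hdetAT : IsUnit Aᵀ.det := by rwa [Matrix.det_transpose]
  have hkey : Aᵀ * S⁻¹ * A = 1 := by
    have hSinv : S⁻¹ = Aᵀ⁻¹ * A⁻¹ := by rw [← hA, Matrix.mul_inv_rev]
    rw [hSinv, ← Matrix.mul_assoc, Matrix.mul_nonsing_inv Aᵀ hdetAT, Matrix.one_mul,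
      Matrix.nonsing_inv_mul A hdetA]
  have hquad : ∀ z : Fin d → ℝ, (A.mulVec z) ⬝ᵥ S⁻¹.mulVec (A.mulVec z) = z ⬝ᵥ z := by
    intro z
    rw [Matrix.dotProduct_mulVec, Matrix.dotProduct_mulVec, ← Matrix.vecMul_transpose,
      Matrix.vecMul_vecMul, Matrix.vecMul_vecMul, ← Matrix.mul_assoc, hkey, Matrix.vecMul_one]
  -- measurability
  have hm : Measurable fun x : Fin d → ℝ => x ⬝ᵥ (S⁻¹).mulVec x := by
    simp only [dotProduct, Matrix.mulVec, dotProduct]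
    exact Finset.measurable_sum _ fun i _ => (measurable_pi_apply i).mul
      (Finset.measurable_sum _ fun j _ => measurable_const.mul (measurable_pi_apply j))
  have hmf : Measurable fun x : Fin d → ℝ => Real.sqrt (x ⬝ᵥ (S⁻¹).mulVec x) :=
    Real.continuous_sqrt.measurable.comp hm
  have hAm : Measurable A.mulVec := by
    refine measurable_pi_lambda _ fun i => ?_
    simp only [Matrix.mulVec, dotProduct]
    exact Finset.measurable_sum _ fun j _ => measurable_const.mul (measurable_pi_apply j)
  have hsmeas : MeasurableSet {x : Fin d → ℝ | ε ≤ Real.sqrt (x ⬝ᵥ S⁻¹.mulVec x)} :=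
    measurableSet_le measurable_const hmf
  -- change of variables
  rw [setIntegral_map hsmeas hmf.aestronglyMeasurable hAm.aemeasurable]
  have hpre : A.mulVec ⁻¹' {x : Fin d → ℝ | ε ≤ Real.sqrt (x ⬝ᵥ S⁻¹.mulVec x)}
      = {z : Fin d → ℝ | ε ≤ Real.sqrt (z ⬝ᵥ z)} := by
    ext z
    simp only [Set.mem_preimage, Set.mem_setOf_eq, hquad z]
  have hint_eq : ∀ z : Fin d → ℝ,
      Real.sqrt (A.mulVec z ⬝ᵥ S⁻¹.mulVec (A.mulVec z)) = Real.sqrt (z ⬝ᵥ z) := fun z => by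
    rw [hquad z]
  simp only [hpre, hint_eq]
  -- pass to indicator
  have hs'meas : MeasurableSet {z : Fin d → ℝ | ε ≤ Real.sqrt (z ⬝ᵥ z)} := by
    refine measurableSet_le measurable_const (Real.continuous_sqrt.measurable.comp ?_)
    simp only [dotProduct]
    exact Finset.measurable_sum _ fun i _ => (measurable_pi_apply i).mul (measurable_pi_apply i)
  rw [← integral_indicator hs'meas]
  -- the dominating function
  set G : (Fin d → ℝ) → ℝ := fun z => Real.sqrt d * ∑ i, gtail t (z i) with hG
  have hint_i : ∀ i : Fin d, Integrable (fun z : Fin d → ℝ => gtail t (z i)) π₀ := by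
    intro i
    have := (integrable_map_measure (gtail_measurable t).aestronglyMeasurable
      (measurable_pi_apply i).aemeasurable (μ := π₀)).mp (by
        rw [pi_map_eval i]; exact integrable_gtail t)
    exact this
  have hGint : Integrable G π₀ :=
    (integrable_finset_sum Finset.univ fun i _ => hint_i i).const_mul _
  have hbound : ∀ z : Fin d → ℝ,
      Set.indicator {z : Fin d → ℝ | ε ≤ Real.sqrt (z ⬝ᵥ z)}
        (fun z => Real.sqrt (z ⬝ᵥ z)) z ≤ G z := by
    intro z
    have hGnn : 0 ≤ G z := mul_nonneg hsd.le
      (Finset.sum_nonneg fun i _ => gtail_nonneg t (z i))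
    by_cases hz : z ∈ {z : Fin d → ℝ | ε ≤ Real.sqrt (z ⬝ᵥ z)}
    · rw [Set.indicator_of_mem hz]
      obtain ⟨i₀, -, hmax⟩ := Finset.exists_max_image Finset.univ (fun i => |z i|)
        ⟨⟨0, hd⟩, Finset.mem_univ _⟩
      have hzz : z ⬝ᵥ z ≤ (d : ℝ) * (z i₀) ^ 2 := by
        have hterm : ∀ i ∈ Finset.univ, z i * z i ≤ (z i₀) ^ 2 := by
          intro i _
          have h := hmax i (Finset.mem_univ i)
          calc z i * z i = |z i| * |z i| := (abs_mul_abs_self (z i)).symm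
            _ ≤ |z i₀| * |z i₀| := mul_le_mul h h (abs_nonneg _) (abs_nonneg _)
            _ = (z i₀) ^ 2 := by rw [abs_mul_abs_self]; ring
        calc z ⬝ᵥ z = ∑ i, z i * z i := rfl
          _ ≤ Finset.univ.card • (z i₀) ^ 2 := Finset.sum_le_card_nsmul _ _ _ hterm
          _ = (d : ℝ) * (z i₀) ^ 2 := by
              simp [Finset.card_univ, nsmul_eq_mul]
      have hsq : Real.sqrt (z ⬝ᵥ z) ≤ Real.sqrt d * |z i₀| := by
        calc Real.sqrt (z ⬝ᵥ z) ≤ Real.sqrt ((d:ℝ) * (z i₀) ^ 2) := Real.sqrt_le_sqrt hzz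
          _ = Real.sqrt d * |z i₀| := by rw [Real.sqrt_mul hd0.le, Real.sqrt_sq_eq_abs]
      have hti : t ≤ |z i₀| := by
        rw [htdef, div_le_iff₀ hsd]
        calc ε ≤ Real.sqrt (z ⬝ᵥ z) := hz
          _ ≤ Real.sqrt d * |z i₀| := hsq
          _ = |z i₀| * Real.sqrt d := mul_comm _ _
      have hgi : gtail t (z i₀) = |z i₀| := by
        unfold gtail
        exact Set.indicator_of_mem (show z i₀ ∈ {y : ℝ | t ≤ |y|} from hti) _
      calc Real.sqrt (z ⬝ᵥ z) ≤ Real.sqrt d * |z i₀| := hsq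
        _ = Real.sqrt d * gtail t (z i₀) := by rw [hgi]
        _ ≤ G z := by
            apply mul_le_mul_of_nonneg_left _ hsd.le
            exact Finset.single_le_sum (fun i _ => gtail_nonneg t (z i)) (Finset.mem_univ i₀)
    · rw [Set.indicator_of_notMem hz]; exact hGnn
  have hmono : ∫ z, Set.indicator {z : Fin d → ℝ | ε ≤ Real.sqrt (z ⬝ᵥ z)}
      (fun z => Real.sqrt (z ⬝ᵥ z)) z ∂π₀ ≤ ∫ z, G z ∂π₀ := by
    refine integral_mono_of_nonneg ?_ hGint ?_
    · filter_upwards with z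
      exact Set.indicator_nonneg (fun y _ => Real.sqrt_nonneg _) z
    · filter_upwards with z; exact hbound z
  refine hmono.trans_eq ?_
  -- compute ∫ G
  have hGval : ∫ z, G z ∂π₀
      = Real.sqrt d * ((d : ℝ) * (2 / Real.sqrt (2 * Real.pi) * Real.exp (-t ^ 2 / 2))) := by
    rw [hG, integral_const_mul, integral_finset_sum _ fun i _ => hint_i i]
    have hone : ∀ i : Fin d, ∫ z, gtail t (z i) ∂π₀
        = 2 / Real.sqrt (2 * Real.pi) * Real.exp (-t ^ 2 / 2) := by
      intro i
      have := integral_map (μ := π₀) (φ := Function.eval i) (f := gtail t)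
        (measurable_pi_apply i).aemeasurable (gtail_measurable t).aestronglyMeasurable
      rw [pi_map_eval i] at this
      rw [← integral_gtail ht, ← this]
    rw [Finset.sum_congr rfl fun i _ => hone i, Finset.sum_const, Finset.card_univ,
      Fintype.card_fin, nsmul_eq_mul]
  rw [hGval]
  have hts : t ^ 2 = ε ^ 2 / d := by
    rw [htdef, div_pow, Real.sq_sqrt hd0.le]
  have hexp : Real.exp (-t ^ 2 / 2) = Real.exp (-ε ^ 2 / (2 * d)) := by
    congr 1
    rw [hts]
    field_simp
  have hpow : (d : ℝ) ^ ((3 : ℝ) / 2) = Real.sqrt d * d := by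
    rw [Real.sqrt_eq_rpow, show (3:ℝ)/2 = 1/2 + 1 by norm_num, Real.rpow_add hd0,
      Real.rpow_one]
  rw [hexp, hpow]
  ring
end

section
/- Let d ≥ 1 and let Z be a random vector in ℝ^d whose coordinates are independent standard real Gaussians (i.e., Z ~ N(0, I_d)). Then for every ε ≥ 0, E[‖Z‖_∞ · 1{‖Z‖₂ ≥ ε}] ≤ (2/√(2π)) · d · exp(−ε²/(2d)), where ‖z‖_∞ = max_i |z_i| and ‖z‖₂ = √(Σ_i z_i²). -/
open MeasureTheory ProbabilityTheory Real Set Filter Topology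

/-! On `{‖z‖₂ ≥ ε}` a largest coordinate satisfies `|z_j| ≥ a := ε / √d`, because `‖z‖₂ ≤ √d ‖z‖_∞`.
Hence `‖z‖_∞ 1{‖z‖₂ ≥ ε} ≤ ∑ᵢ |zᵢ| 1{|zᵢ| ≥ a}`, and for a standard Gaussian `X` one computes
`E[|X| 1{|X| ≥ a}] = 2 ∫ₐ^∞ x φ(x) dx = (2 / √(2π)) e^{-a²/2}`. -/

theorem integral_Ioi_mul_exp_neg_mul_sq {b : ℝ} (hb : 0 < b) (a : ℝ) :
    ∫ x in Ioi a, x * exp (-b * x ^ 2) = exp (-b * a ^ 2) / (2 * b) := by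
  have hderiv : ∀ x ∈ Ici a, HasDerivAt (fun x => exp (-b * x ^ 2) * -(2 * b)⁻¹)
      (x * exp (-b * x ^ 2)) x := fun x _ =>
    (((hasDerivAt_pow 2 x).const_mul (-b)).exp.mul_const _).congr_deriv (by push_cast; field_simp)
  have hlim : Tendsto (fun x => exp (-b * x ^ 2) * -(2 * b)⁻¹) atTop (𝓝 (0 * -(2 * b)⁻¹)) :=
    (tendsto_exp_atBot.comp ((tendsto_pow_atTop two_ne_zero).const_mul_atTop_of_neg
      (neg_lt_zero.2 hb))).mul_const _
  rw [integral_Ioi_of_hasDerivAt_of_tendsto' hderiv (integrable_mul_exp_neg_mul_sq hb).integrableOn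
    hlim]
  ring

noncomputable def absTail (a : ℝ) : ℝ → ℝ := {x | a ≤ |x|}.indicator fun x => |x|

theorem absTail_nonneg (a x : ℝ) : 0 ≤ absTail a x :=
  indicator_nonneg (fun _ _ => abs_nonneg _) x

theorem absTail_of_le {a x : ℝ} (h : a ≤ |x|) : absTail a x = |x| :=
  indicator_of_mem (s := {x : ℝ | a ≤ |x|}) h _

theorem integrable_absTail_gaussianReal (a : ℝ) : Integrable (absTail a) (gaussianReal 0 1) :=
  ((memLp_id_gaussianReal 1).integrable le_rfl).abs.indicator
    (measurableSet_le measurable_const measurable_abs)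

theorem integral_absTail_gaussianReal {a : ℝ} (ha : 0 ≤ a) :
    ∫ x, absTail a x ∂gaussianReal 0 1 = 2 / √(2 * π) * exp (-a ^ 2 / 2) := by
  set F : ℝ → ℝ := (Ici a).indicator fun y => (√(2 * π))⁻¹ * (y * exp (-(1 / 2) * y ^ 2))
  -- The integrand is even, so `integral_comp_abs` folds it onto `(0, ∞)`.
  have hF : ∀ x, gaussianPDFReal 0 1 x • absTail a x = F |x| := by
    intro x
    by_cases hx : a ≤ |x|
    · simp only [F, absTail, gaussianPDFReal, mem_ofPred_eq, mem_Ici, hx, indicator_of_mem,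
        smul_eq_mul, sq_abs, NNReal.coe_one, sub_zero, mul_one]
      ring_nf
    · simp [F, absTail, hx]
  have hF_support : ∀ y ∉ Ioi 0, F y = 0 := fun y hy => by
    by_cases hya : a ≤ y
    · have : y = 0 := by simp at hy; linarith
      simp [F, this]
    · simp [F, hya]
  rw [integral_gaussianReal_eq_integral_smul one_ne_zero, funext hF, integral_comp_abs,
    setIntegral_eq_integral_of_forall_compl_eq_zero hF_support, integral_indicator measurableSet_Ici,
    integral_Ici_eq_integral_Ioi, integral_const_mul,
    integral_Ioi_mul_exp_neg_mul_sq (by norm_num)]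
  ring_nf

theorem integral_sum_absTail_pi_gaussianReal (d : ℕ) {a : ℝ} (ha : 0 ≤ a) :
    ∫ z, ∑ i, absTail a (z i) ∂(Measure.pi fun _ : Fin d => gaussianReal 0 1) =
      d * (2 / √(2 * π) * exp (-a ^ 2 / 2)) := by
  rw [integral_finsetSum _ fun i _ => integrable_comp_eval (integrable_absTail_gaussianReal a)]
  have hcoord (i : Fin d) : ∫ z, absTail a (z i) ∂(Measure.pi fun _ : Fin d => gaussianReal 0 1) =
      ∫ x, absTail a x ∂gaussianReal 0 1 :=
    integral_comp_eval (integrable_absTail_gaussianReal a).aestronglyMeasurable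
  simp only [hcoord, integral_absTail_gaussianReal ha, Finset.sum_const, Finset.card_univ,
    Fintype.card_fin, nsmul_eq_mul]

theorem iSup_abs_le_sum_absTail {ι : Type*} [Fintype ι] {ε : ℝ} {z : ι → ℝ}
    (hz : ε ≤ √(∑ i, z i ^ 2)) :
    ⨆ i, |z i| ≤ ∑ i, absTail (ε / √(Fintype.card ι)) (z i) := by
  refine Real.iSup_le (fun i => ?_) (Finset.sum_nonneg fun i _ => absTail_nonneg _ _)
  have : Nonempty ι := ⟨i⟩
  obtain ⟨j, hj⟩ := Finite.exists_max fun i => |z i|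
  have hcard : 0 < √(Fintype.card ι) := by simp [Fintype.card_pos]
  have hl2 : √(∑ i, z i ^ 2) ≤ √(Fintype.card ι) * |z j| := by
    rw [← sqrt_sq (abs_nonneg (z j)), ← sqrt_mul (Nat.cast_nonneg _)]
    gcongr
    calc ∑ i, z i ^ 2 = ∑ i, |z i| ^ 2 := by simp
      _ ≤ ∑ _i, |z j| ^ 2 := Finset.sum_le_sum fun i _ => pow_le_pow_left₀ (abs_nonneg _) (hj i) 2
      _ = _ := by simp
  have hj_mem : ε / √(Fintype.card ι) ≤ |z j| := by
    rw [div_le_iff₀' hcard]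
    exact hz.trans hl2
  calc |z i| ≤ |z j| := hj i
    _ = absTail (ε / √(Fintype.card ι)) (z j) := (absTail_of_le hj_mem).symm
    _ ≤ _ := Finset.single_le_sum (f := fun i => absTail _ (z i)) (fun i _ => absTail_nonneg _ _)
        (Finset.mem_univ j)

theorem std_gaussian_sup_norm_tail_bound_general {d : ℕ} (ε : ℝ) (hε : 0 ≤ ε) :
    ∫ z in {z : Fin d → ℝ | ε ≤ Real.sqrt (∑ i, z i ^ 2)}, (⨆ i, |z i|)
        ∂(Measure.pi fun _ : Fin d => gaussianReal 0 1) ≤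
      2 / Real.sqrt (2 * Real.pi) * d * Real.exp (-ε ^ 2 / (2 * d)) := by
  set μ := Measure.pi fun _ : Fin d => gaussianReal 0 1
  set S := {z : Fin d → ℝ | ε ≤ √(∑ i, z i ^ 2)}
  have hG : Integrable (fun z : Fin d → ℝ => ∑ i, absTail (ε / √d) (z i)) μ :=
    integrable_finsetSum _ fun i _ => integrable_comp_eval (integrable_absTail_gaussianReal _)
  have hS : MeasurableSet S := measurableSet_le measurable_const (by fun_prop)
  have hexponent : -(ε / √d) ^ 2 / 2 = -ε ^ 2 / (2 * d) := by
    rw [div_pow, sq_sqrt (Nat.cast_nonneg d)]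
    ring
  calc ∫ z in S, ⨆ i, |z i| ∂μ ≤ ∫ z in S, ∑ i, absTail (ε / √d) (z i) ∂μ := by
        refine integral_mono_of_nonneg (ae_of_all _ fun z => Real.iSup_nonneg fun i => abs_nonneg _)
          hG.integrableOn ((ae_restrict_iff' hS).2 (ae_of_all _ fun z hz => ?_))
        simpa only [Fintype.card_fin] using iSup_abs_le_sum_absTail hz
    _ ≤ ∫ z, ∑ i, absTail (ε / √d) (z i) ∂μ :=
        setIntegral_le_integral hG
          (ae_of_all _ fun z => Finset.sum_nonneg fun i _ => absTail_nonneg _ _)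
    _ = _ := by
        rw [integral_sum_absTail_pi_gaussianReal d (by positivity), hexponent]
        ring

/-- Let `d ≥ 1` and `Z ~ N(0, I_d)` (i.e. `d` i.i.d. standard Gaussian coordinates).
Then for every `ε ≥ 0`,
`E[‖Z‖_∞ · 1{‖Z‖₂ ≥ ε}] ≤ (2/√(2π)) · d · exp(−ε²/(2d))`. -/
theorem std_gaussian_sup_norm_tail_bound {d : ℕ} (hd : 1 ≤ d) (ε : ℝ) (hε : 0 ≤ ε) :
    ∫ z in {z : Fin d → ℝ | ε ≤ Real.sqrt (∑ i, z i ^ 2)}, (⨆ i, |z i|)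
        ∂(Measure.pi fun _ : Fin d => gaussianReal 0 1) ≤
      2 / Real.sqrt (2 * Real.pi) * d * Real.exp (-ε ^ 2 / (2 * d)) :=
  std_gaussian_sup_norm_tail_bound_general ε hε
end

section
/- Given σ > 0, a d×d real symmetric positive definite matrix Σ₀, and vectors A₁,…,Aₙ ∈ ℝ^d with ‖A_t‖₂ ≤ κ for all t, define V_t = Σ_{ℓ=1}^{t−1} A_ℓ A_ℓᵀ and Σ_t = (Σ₀⁻¹ + σ⁻² V_t)⁻¹ for t = 1,…,n+1. If C > 0 satisfies λ_max(Σ₀) ≤ σ² C / κ², where λ_max denotes the largest eigenvalue, then Σ_{t=1}^n ‖A_t‖²_{Σ_t} ≤ σ² (1 + C) · log( det(Σ_{n+1}⁻¹) / det(Σ₁⁻¹) ), where Σ₁⁻¹ = Σ₀⁻¹. -/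
/-!
The precision matrices `Σ_t⁻¹ = Σ₀⁻¹ + σ⁻² V_t` grow by the rank-one term `σ⁻² A_t A_tᵀ` at each
step, so by the matrix determinant lemma the log-determinant ratio telescopes into
`∑ₜ log (1 + σ⁻² ‖A_t‖²_{Σ_t})`. Since `Σ_t⁻¹ ≥ Σ₀⁻¹` in the Loewner order,
`‖A_t‖²_{Σ_t} ≤ ‖A_t‖²_{Σ₀} ≤ λ_max(Σ₀) κ² ≤ σ² C`, and on `[0, C]` one has
`x ≤ (1 + C) log (1 + x)`.
-/

open Finset Matrix
open scoped MatrixOrder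

theorem Real.le_mul_log_one_add_of_le {x C : ℝ} (hx : 0 ≤ x) (hxC : x ≤ C) :
    x ≤ (1 + C) * Real.log (1 + x) := by
  have hx1 : 0 < 1 + x := by linarith
  calc x = (1 + x) * (1 - (1 + x)⁻¹) := by field_simp; ring
    _ ≤ (1 + x) * Real.log (1 + x) :=
      mul_le_mul_of_nonneg_left (Real.one_sub_inv_le_log_of_pos hx1) hx1.le
    _ ≤ (1 + C) * Real.log (1 + x) :=
      mul_le_mul_of_nonneg_right (by linarith) (Real.log_nonneg (by linarith))

theorem Real.le_mul_mul_log_one_add_inv_mul {s w C : ℝ} (hs : 0 ≤ s) (hw : 0 ≤ w)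
    (hwC : w ≤ s * C) : w ≤ s * (1 + C) * Real.log (1 + s⁻¹ * w) := by
  rcases hs.eq_or_lt with rfl | hs
  · simp [le_antisymm (by simpa using hwC) hw]
  have hx : s⁻¹ * w ≤ C := by rwa [inv_mul_le_iff₀ hs]
  calc w = s * (s⁻¹ * w) := by field_simp
    _ ≤ s * ((1 + C) * Real.log (1 + s⁻¹ * w)) :=
      mul_le_mul_of_nonneg_left (Real.le_mul_log_one_add_of_le (by positivity) hx) hs.le
    _ = s * (1 + C) * Real.log (1 + s⁻¹ * w) := by ring

namespace Matrix

variable {ι : Type*} [Fintype ι]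

theorem posSemidef_smul_sum_vecMulVec_self {c : ℝ} (hc : 0 ≤ c) (s : Finset ℕ) (u : ℕ → ι → ℝ) :
    (c • ∑ ℓ ∈ s, vecMulVec (u ℓ) (u ℓ)).PosSemidef :=
  (posSemidef_sum s fun ℓ _ => by simpa using posSemidef_vecMulVec_self_star (u ℓ)).smul hc

variable [DecidableEq ι]

theorem det_add_vecMulVec {R : Type*} [CommRing R] {M : Matrix ι ι R} (hM : IsUnit M.det)
    (u v : ι → R) : (M + vecMulVec u v).det = M.det * (1 + v ⬝ᵥ M⁻¹ *ᵥ u) := by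
  have h : M + vecMulVec u v = M * (1 + replicateCol Unit (M⁻¹ *ᵥ u) * replicateRow Unit v) := by
    rw [← vecMulVec_eq, Matrix.mul_add, Matrix.mul_one, mul_vecMulVec, mulVec_mulVec,
      mul_nonsing_inv _ hM, one_mulVec]
  rw [h, det_mul, det_one_add_replicateCol_mul_replicateRow]

theorem log_det_div_eq_sum_log_of_add_vecMulVec {M : ℕ → Matrix ι ι ℝ} {u v : ℕ → ι → ℝ}
    {m k : ℕ} (hmk : m ≤ k) (hM : ∀ t, 0 < (M t).det)
    (hstep : ∀ t ∈ Ico m k, M (t + 1) = M t + vecMulVec (u t) (v t)) :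
    Real.log ((M k).det / (M m).det) = ∑ t ∈ Ico m k, Real.log (1 + v t ⬝ᵥ (M t)⁻¹ *ᵥ u t) := by
  rw [Real.log_div (hM k).ne' (hM m).ne', ← sum_Ico_sub (fun t => Real.log (M t).det) hmk]
  refine sum_congr rfl fun t ht => ?_
  have hdet := det_add_vecMulVec (hM t).ne'.isUnit (u t) (v t)
  rw [← hstep t ht] at hdet
  have hfactor : 0 < 1 + v t ⬝ᵥ (M t)⁻¹ *ᵥ u t :=
    pos_of_mul_pos_right (hdet ▸ hM (t + 1)) (hM t).le
  rw [hdet, Real.log_mul (hM t).ne' hfactor.ne', add_sub_cancel_left]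

theorem IsHermitian.dotProduct_mulVec_le_iSup_eigenvalues_mul {S : Matrix ι ι ℝ}
    (hS : S.IsHermitian) (x : ι → ℝ) :
    x ⬝ᵥ S *ᵥ x ≤ (⨆ i, hS.eigenvalues i) * (x ⬝ᵥ x) := by
  have hle : S ≤ algebraMap ℝ _ (⨆ i, hS.eigenvalues i) := by
    refine le_algebraMap_of_spectrum_le (fun r hr => ?_) hS.isSelfAdjoint
    obtain ⟨i, rfl⟩ := hS.spectrum_real_eq_range_eigenvalues ▸ hr
    exact le_ciSup (Set.finite_range _).bddAbove i
  simpa [Algebra.algebraMap_eq_smul_one, sub_mulVec, sub_nonneg, smul_mulVec]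
    using (le_iff.mp hle).dotProduct_mulVec_nonneg x

theorem PosDef.dotProduct_inv_mulVec_le_of_le {P M : Matrix ι ι ℝ} (hP : P.PosDef) (hPM : P ≤ M)
    (a : ι → ℝ) : a ⬝ᵥ M⁻¹ *ᵥ a ≤ a ⬝ᵥ P⁻¹ *ᵥ a := by
  have hM : M.PosDef := by simpa using hP.add_posSemidef (le_iff.mp hPM)
  -- With `y = M⁻¹ a`, `z = P⁻¹ a`: `aᵀ M⁻¹ a = 2 aᵀy - yᵀMy ≤ 2 aᵀy - yᵀPy ≤ aᵀz`,
  -- the last step being `(y - z)ᵀ P (y - z) ≥ 0`.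
  set y := M⁻¹ *ᵥ a
  set z := P⁻¹ *ᵥ a
  have hMy : M *ᵥ y = a := by simp [y, mulVec_mulVec, mul_nonsing_inv _ hM.det_pos.ne'.isUnit]
  have hPz : P *ᵥ z = a := by simp [z, mulVec_mulVec, mul_nonsing_inv _ hP.det_pos.ne'.isUnit]
  have hzPy : z ⬝ᵥ P *ᵥ y = a ⬝ᵥ y := by
    rw [dotProduct_mulVec, ← mulVec_transpose, ← conjTranspose_eq_transpose_of_trivial, hP.1.eq,
      hPz]
  have hPM_y : y ⬝ᵥ P *ᵥ y ≤ y ⬝ᵥ a := by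
    simpa [sub_mulVec, sub_nonneg, hMy] using (le_iff.mp hPM).dotProduct_mulVec_nonneg y
  have hsq : 0 ≤ (y - z) ⬝ᵥ P *ᵥ (y - z) := by
    simpa using hP.posSemidef.dotProduct_mulVec_nonneg (y - z)
  rw [mulVec_sub, sub_dotProduct, dotProduct_sub, dotProduct_sub, hzPy, hPz] at hsq
  rw [dotProduct_comm y a] at hPM_y hsq
  rw [dotProduct_comm z a] at hsq
  linarith

end Matrix

section PosteriorPrecision

variable {ι : Type*} [Fintype ι] [DecidableEq ι]

noncomputable def posteriorPrecision (S0 : Matrix ι ι ℝ) (σ : ℝ) (A : ℕ → ι → ℝ) (t : ℕ) :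
    Matrix ι ι ℝ :=
  S0⁻¹ + (σ ^ 2)⁻¹ • ∑ ℓ ∈ Ico 1 t, vecMulVec (A ℓ) (A ℓ)

variable {S0 : Matrix ι ι ℝ} {σ : ℝ} {A : ℕ → ι → ℝ}

theorem posteriorPrecision_posDef (hS0 : S0.PosDef) (t : ℕ) :
    (posteriorPrecision S0 σ A t).PosDef :=
  hS0.inv.add_posSemidef (posSemidef_smul_sum_vecMulVec_self (by positivity) _ A)

theorem posteriorPrecision_succ {t : ℕ} (ht : 1 ≤ t) :
    posteriorPrecision S0 σ A (t + 1) =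
      posteriorPrecision S0 σ A t + vecMulVec ((σ ^ 2)⁻¹ • A t) (A t) := by
  rw [posteriorPrecision, posteriorPrecision, sum_Ico_succ_top ht, smul_add, smul_vecMulVec,
    add_assoc]

theorem log_det_posteriorPrecision_div (hS0 : S0.PosDef) (n : ℕ) :
    Real.log ((posteriorPrecision S0 σ A (n + 1)).det / (posteriorPrecision S0 σ A 1).det) =
      ∑ t ∈ Icc 1 n,
        Real.log (1 + (σ ^ 2)⁻¹ * (A t ⬝ᵥ (posteriorPrecision S0 σ A t)⁻¹ *ᵥ A t)) := by
  rw [log_det_div_eq_sum_log_of_add_vecMulVec (by omega)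
      (fun t => (posteriorPrecision_posDef hS0 t).det_pos)
      (fun t ht => posteriorPrecision_succ (mem_Ico.mp ht).1),
    Ico_add_one_right_eq_Icc]
  simp only [mulVec_smul, dotProduct_smul, smul_eq_mul]

theorem dotProduct_posteriorPrecision_inv_mulVec_le (hS0 : S0.PosDef) (t : ℕ) (a : ι → ℝ) :
    a ⬝ᵥ (posteriorPrecision S0 σ A t)⁻¹ *ᵥ a ≤ (⨆ i, hS0.1.eigenvalues i) * (a ⬝ᵥ a) :=
  have hle : S0⁻¹ ≤ posteriorPrecision S0 σ A t :=
    le_add_of_nonneg_right (posSemidef_smul_sum_vecMulVec_self (by positivity) _ A).nonneg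
  calc a ⬝ᵥ (posteriorPrecision S0 σ A t)⁻¹ *ᵥ a ≤ a ⬝ᵥ S0⁻¹⁻¹ *ᵥ a :=
        hS0.inv.dotProduct_inv_mulVec_le_of_le hle a
    _ = a ⬝ᵥ S0 *ᵥ a := by rw [nonsing_inv_nonsing_inv _ hS0.det_pos.ne'.isUnit]
    _ ≤ (⨆ i, hS0.1.eigenvalues i) * (a ⬝ᵥ a) :=
      hS0.1.dotProduct_mulVec_le_iSup_eigenvalues_mul a

end PosteriorPrecision

theorem sum_posterior_norm_sq_le_general {d n : ℕ} (σ κ C : ℝ)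
    (S0 : Matrix (Fin d) (Fin d) ℝ) (hS0 : S0.PosDef)
    (A : ℕ → Fin d → ℝ)
    (hA : ∀ t ∈ Finset.Icc 1 n, Real.sqrt (A t ⬝ᵥ A t) ≤ κ)
    (V : ℕ → Matrix (Fin d) (Fin d) ℝ)
    (hV : ∀ t, V t = ∑ ℓ ∈ Finset.Ico 1 t, Matrix.vecMulVec (A ℓ) (A ℓ))
    (Sig : ℕ → Matrix (Fin d) (Fin d) ℝ)
    (hSig : ∀ t, Sig t = (S0⁻¹ + (σ ^ 2)⁻¹ • V t)⁻¹)
    (hC : 0 < C)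
    (hCbound : (⨆ i, hS0.1.eigenvalues i) ≤ σ ^ 2 * C / κ ^ 2) :
    ∑ t ∈ Finset.Icc 1 n, A t ⬝ᵥ (Sig t).mulVec (A t) ≤
      σ ^ 2 * (1 + C) * Real.log ((Sig (n + 1))⁻¹.det / (Sig 1)⁻¹.det) := by
  set P := posteriorPrecision S0 σ A
  have hSig_eq : ∀ t, Sig t = (P t)⁻¹ := fun t => by rw [hSig, hV]; rfl
  have hSig_inv : ∀ t, (Sig t)⁻¹ = P t := fun t => by
    rw [hSig_eq, nonsing_inv_nonsing_inv _ (posteriorPrecision_posDef hS0 t).det_pos.ne'.isUnit]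
  have hnorm_le : ∀ t ∈ Icc 1 n, A t ⬝ᵥ (P t)⁻¹ *ᵥ A t ≤ σ ^ 2 * C := fun t ht => by
    have hAA : A t ⬝ᵥ A t ≤ κ ^ 2 := (Real.sqrt_le_iff.mp (hA t ht)).2
    calc A t ⬝ᵥ (P t)⁻¹ *ᵥ A t ≤ (⨆ i, hS0.1.eigenvalues i) * (A t ⬝ᵥ A t) :=
          dotProduct_posteriorPrecision_inv_mulVec_le hS0 t (A t)
      _ ≤ σ ^ 2 * C / κ ^ 2 * (A t ⬝ᵥ A t) := by gcongr; exact dotProduct_self_star_nonneg _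
      _ = σ ^ 2 * C * (A t ⬝ᵥ A t / κ ^ 2) := by ring
      _ ≤ σ ^ 2 * C := mul_le_of_le_one_right (by positivity) (div_le_one_of_le₀ hAA (sq_nonneg κ))
  rw [hSig_inv, hSig_inv, log_det_posteriorPrecision_div hS0, mul_sum]
  simp only [hSig_eq]
  exact sum_le_sum fun t ht => Real.le_mul_mul_log_one_add_inv_mul (sq_nonneg σ)
    (by simpa using (posteriorPrecision_posDef hS0 t).inv.posSemidef.dotProduct_mulVec_nonneg (A t))
    (hnorm_le t ht)

/-- Given `σ > 0`, a positive definite `Σ₀`, and vectors `A₁,…,Aₙ` with `‖A_t‖₂ ≤ κ`,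
let `V_t = Σ_{ℓ=1}^{t−1} A_ℓ A_ℓᵀ` and `Σ_t = (Σ₀⁻¹ + σ⁻² V_t)⁻¹`. If `C > 0` satisfies
`λ_max(Σ₀) ≤ σ² C / κ²`, then
`Σ_{t=1}^n ‖A_t‖²_{Σ_t} ≤ σ² (1 + C) log(det(Σ_{n+1}⁻¹)/det(Σ₁⁻¹))`. -/
theorem sum_posterior_norm_sq_le {d n : ℕ} (σ κ C : ℝ) (hσ : 0 < σ)
    (S0 : Matrix (Fin d) (Fin d) ℝ) (hS0 : S0.PosDef)
    (A : ℕ → Fin d → ℝ)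
    (hA : ∀ t ∈ Finset.Icc 1 n, Real.sqrt (A t ⬝ᵥ A t) ≤ κ)
    (V : ℕ → Matrix (Fin d) (Fin d) ℝ)
    (hV : ∀ t, V t = ∑ ℓ ∈ Finset.Ico 1 t, Matrix.vecMulVec (A ℓ) (A ℓ))
    (Sig : ℕ → Matrix (Fin d) (Fin d) ℝ)
    (hSig : ∀ t, Sig t = (S0⁻¹ + (σ ^ 2)⁻¹ • V t)⁻¹)
    (hC : 0 < C)
    (hCbound : (⨆ i, hS0.1.eigenvalues i) ≤ σ ^ 2 * C / κ ^ 2) :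
    ∑ t ∈ Finset.Icc 1 n, A t ⬝ᵥ (Sig t).mulVec (A t) ≤
      σ ^ 2 * (1 + C) * Real.log ((Sig (n + 1))⁻¹.det / (Sig 1)⁻¹.det) :=
  sum_posterior_norm_sq_le_general σ κ C S0 hS0 A hA V hV Sig hSig hC hCbound
end

section
/- Given σ > 0, a d×d real symmetric positive definite matrix Σ₀, and vectors A₁,…,Aₙ ∈ ℝ^d, define V_t = Σ_{ℓ=1}^{t−1} A_ℓ A_ℓᵀ and Σ_t = (Σ₀⁻¹ + σ⁻² V_t)⁻¹ for t = 1,…,n+1. Then det(Σ_{n+1}⁻¹) = det(Σ₀⁻¹) · Π_{t=1}^n (1 + σ⁻² ‖A_t‖²_{Σ_t}). -/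
/-!
The precision matrix `Σ_{t+1}⁻¹ = Σ_t⁻¹ + σ⁻² A_t A_tᵀ` is a rank-one update of `Σ_t⁻¹`, so the
matrix determinant lemma `det (P + u vᵀ) = det P · (1 + vᵀ P⁻¹ u)` multiplies the determinant by
`1 + σ⁻² A_tᵀ Σ_t A_t`; the product formula follows by telescoping. The lemma applies at every
step because each precision matrix `Σ₀⁻¹ + σ⁻² V_t` is positive definite, hence invertible.
-/

open Finset Matrix

namespace Matrix

theorem det_add_vecMulVec_s5 {m α : Type*} [Fintype m] [DecidableEq m] [CommRing α]
    {A : Matrix m m α} (hA : IsUnit A.det) (u v : m → α) :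
    (A + vecMulVec u v).det = A.det * (1 + v ⬝ᵥ A⁻¹ *ᵥ u) := by
  rw [vecMulVec_eq Unit, det_add_replicateCol_mul_replicateRow hA, det_unique (n := Unit)]
  simp only [add_apply, one_apply_eq, mul_apply, replicateRow_apply, replicateCol_apply,
    dotProduct, mulVec, Finset.sum_mul, Finset.mul_sum]
  rw [Finset.sum_comm]
  simp only [mul_comm, mul_left_comm]

theorem PosDef.add_smul_sum_vecMulVec_self {m ι : Type*} [Fintype m]
    {P : Matrix m m ℝ} (hP : P.PosDef) {c : ℝ} (hc : 0 ≤ c) (s : Finset ι) (a : ι → m → ℝ) :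
    (P + c • ∑ i ∈ s, vecMulVec (a i) (a i)).PosDef :=
  hP.add_posSemidef <| (posSemidef_sum s fun i _ => posSemidef_vecMulVec_self_star (a i)).smul hc

end Matrix

theorem Finset.eq_mul_prod_Icc_of_succ_eq_mul {M : Type*} [CommMonoid M] {f g : ℕ → M}
    (h : ∀ t, 1 ≤ t → f (t + 1) = f t * g t) (n : ℕ) :
    f (n + 1) = f 1 * ∏ t ∈ Icc 1 n, g t := by
  induction n with
  | zero => simp
  | succ n ih => rw [h _ (by omega), ih, prod_Icc_succ_top (by omega), mul_assoc]

theorem det_posterior_precision_eq_general {d n : ℕ} (σ : ℝ)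
    (S0 : Matrix (Fin d) (Fin d) ℝ) (hS0 : S0.PosDef)
    (A : ℕ → Fin d → ℝ)
    (V : ℕ → Matrix (Fin d) (Fin d) ℝ)
    (hV : ∀ t, V t = ∑ ℓ ∈ Finset.Ico 1 t, Matrix.vecMulVec (A ℓ) (A ℓ))
    (Sig : ℕ → Matrix (Fin d) (Fin d) ℝ)
    (hSig : ∀ t, Sig t = (S0⁻¹ + (σ ^ 2)⁻¹ • V t)⁻¹) :
    (Sig (n + 1))⁻¹.det =
      (S0⁻¹).det * ∏ t ∈ Finset.Icc 1 n, (1 + (σ ^ 2)⁻¹ * (A t ⬝ᵥ (Sig t).mulVec (A t))) := by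
  set c : ℝ := (σ ^ 2)⁻¹
  have hunit : ∀ t, IsUnit (S0⁻¹ + c • V t).det := fun t => by
    rw [hV t]
    exact (isUnit_iff_isUnit_det _).mp
      (hS0.inv.add_smul_sum_vecMulVec_self (inv_nonneg.mpr (sq_nonneg σ)) _ A).isUnit
  have hSig_inv : ∀ t, (Sig t)⁻¹ = S0⁻¹ + c • V t := fun t => by
    rw [hSig t, nonsing_inv_nonsing_inv _ (hunit t)]
  have hrank_one : ∀ t, 1 ≤ t → V (t + 1) = V t + vecMulVec (A t) (A t) := fun t ht => by
    rw [hV, hV, sum_Ico_succ_top ht]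
  have hstep : ∀ t, 1 ≤ t →
      (Sig (t + 1))⁻¹.det = (Sig t)⁻¹.det * (1 + c * (A t ⬝ᵥ Sig t *ᵥ A t)) := fun t ht => by
    rw [hSig_inv, hSig_inv, hrank_one t ht, smul_add, ← add_assoc, ← smul_vecMulVec,
      det_add_vecMulVec_s5 (hunit t), ← hSig, mulVec_smul, dotProduct_smul, smul_eq_mul]
  have hbase : (Sig 1)⁻¹.det = S0⁻¹.det := by simp [hSig_inv, hV]
  rw [← hbase]
  exact Finset.eq_mul_prod_Icc_of_succ_eq_mul (f := fun t => (Sig t)⁻¹.det) hstep n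

/-- Given `σ > 0`, a positive definite `Σ₀`, and vectors `A₁,…,Aₙ ∈ ℝ^d`, let
`V_t = Σ_{ℓ=1}^{t−1} A_ℓ A_ℓᵀ` and `Σ_t = (Σ₀⁻¹ + σ⁻² V_t)⁻¹`. Then
`det(Σ_{n+1}⁻¹) = det(Σ₀⁻¹) · Π_{t=1}^n (1 + σ⁻² ‖A_t‖²_{Σ_t})`. -/
theorem det_posterior_precision_eq {d n : ℕ} (σ : ℝ) (hσ : 0 < σ)
    (S0 : Matrix (Fin d) (Fin d) ℝ) (hS0 : S0.PosDef)
    (A : ℕ → Fin d → ℝ)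
    (V : ℕ → Matrix (Fin d) (Fin d) ℝ)
    (hV : ∀ t, V t = ∑ ℓ ∈ Finset.Ico 1 t, Matrix.vecMulVec (A ℓ) (A ℓ))
    (Sig : ℕ → Matrix (Fin d) (Fin d) ℝ)
    (hSig : ∀ t, Sig t = (S0⁻¹ + (σ ^ 2)⁻¹ • V t)⁻¹) :
    (Sig (n + 1))⁻¹.det =
      (S0⁻¹).det * ∏ t ∈ Finset.Icc 1 n, (1 + (σ ^ 2)⁻¹ * (A t ⬝ᵥ (Sig t).mulVec (A t))) :=
  det_posterior_precision_eq_general σ S0 hS0 A V hV Sig hSig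
end

section
/- Let α, β > 0 and let X be a random variable with the Beta(α, β) distribution. Then X − E[X] is σ²-sub-Gaussian with σ² = 1/(4(α + β + 1)); that is, for every λ ∈ ℝ, E[exp(λ (X − E[X]))] ≤ exp( λ² / (8(α + β + 1)) ). -/
/-!
Let `g(t)` be the derivative of `log E[exp(tX)]`, the mean of the exponentially tilted law.
Stein's identity `E[X(1-X) f'(X)] = E[((α+β)X - α) f(X)]` for the Beta law, applied to
`f(x) = exp(tx)`, gives the Riccati-type relation `t g'(t) = t(g - g²) + α - (α+β) g`.
Since `g - g² ≤ 1/4`, this forces `g'(t) < 1/(4(α+β+1))` whenever `g(t)` lies above the line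
`α/(α+β) + t/(4(α+β+1))`; as `g(0) = α/(α+β)`, the tilted mean stays below that line for
`t ≥ 0`, and integrating gives the bound for `λ ≥ 0`. The reflection `x ↦ 1 - x`, which
exchanges `Beta(α, β)` and `Beta(β, α)`, gives `λ ≤ 0`.
-/

open MeasureTheory Real

noncomputable def betaMeasure (α β : ℝ) : Measure ℝ :=
  (volume.restrict (Set.Ioo (0 : ℝ) 1)).withDensity fun x =>
    ENNReal.ofReal (x ^ (α - 1) * (1 - x) ^ (β - 1) /
      ∫ y in Set.Ioo (0 : ℝ) 1, y ^ (α - 1) * (1 - y) ^ (β - 1))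

open Set
open ProbabilityTheory hiding betaMeasure

lemma ProbabilityTheory.hasDerivAt_deriv_cgf {Ω : Type*} {m : MeasurableSpace Ω} {X : Ω → ℝ}
    {μ : Measure Ω} {v : ℝ} (h : v ∈ interior (integrableExpSet X μ)) :
    HasDerivAt (deriv (cgf X μ)) (iteratedDeriv 2 (cgf X μ) v) v := by
  rw [iteratedDeriv_succ, iteratedDeriv_one]
  exact (analyticAt_cgf h).deriv.differentiableAt.hasDerivAt

noncomputable def betaWeight (α β x : ℝ) : ℝ := x ^ (α - 1) * (1 - x) ^ (β - 1)

section

variable {α β : ℝ}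

@[fun_prop]
lemma measurable_betaWeight (α β : ℝ) : Measurable (betaWeight α β) := by
  unfold betaWeight
  fun_prop

lemma betaWeight_pos {x : ℝ} (hx : x ∈ Ioo (0 : ℝ) 1) : 0 < betaWeight α β x :=
  mul_pos (rpow_pos_of_pos hx.1 _) (rpow_pos_of_pos (sub_pos.2 hx.2) _)

lemma integrableOn_betaWeight (hα : 0 < α) (hβ : 0 < β) :
    IntegrableOn (betaWeight α β) (Ioo 0 1) := by
  have h := Complex.betaIntegral_convergent (u := α) (v := β) (by simpa) (by simpa)
  rw [intervalIntegrable_iff_integrableOn_Ioo_of_le zero_le_one] at h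
  refine IntegrableOn.congr_fun h.re (fun x hx => ?_) measurableSet_Ioo
  have h1 := Complex.ofReal_cpow hx.1.le (α - 1)
  have h2 := Complex.ofReal_cpow (sub_nonneg.2 hx.2.le) (β - 1)
  push_cast at h1 h2
  rw [RCLike.re_to_complex, ← h1, ← h2, ← Complex.ofReal_mul, Complex.ofReal_re, betaWeight]

lemma integrableOn_mul_betaWeight (hα : 0 < α) (hβ : 0 < β) {φ : ℝ → ℝ}
    (hφ : ContinuousOn φ (Icc 0 1)) :
    IntegrableOn (fun x => φ x * betaWeight α β x) (Ioo 0 1) := by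
  simpa only [mul_comm] using (integrableOn_betaWeight hα hβ).mul_continuousOn_of_subset hφ
    measurableSet_Ioo isCompact_Icc Ioo_subset_Icc_self

lemma setIntegral_betaWeight_pos (hα : 0 < α) (hβ : 0 < β) :
    0 < ∫ x in Ioo 0 1, betaWeight α β x := by
  rw [setIntegral_pos_iff_support_of_nonneg_ae
    ((ae_restrict_iff' measurableSet_Ioo).2 (ae_of_all _ fun _ hx => (betaWeight_pos hx).le))
    (integrableOn_betaWeight hα hβ),
    inter_eq_right.2 fun x hx => Function.mem_support.2 (betaWeight_pos hx).ne']
  simp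

lemma setIntegral_comp_one_sub_mul_betaWeight (f : ℝ → ℝ) :
    ∫ x in Ioo 0 1, f (1 - x) * betaWeight α β x =
      ∫ x in Ioo 0 1, f x * betaWeight β α x := by
  simp only [← integral_Ioc_eq_integral_Ioo, ← intervalIntegral.integral_of_le zero_le_one]
  have h := intervalIntegral.integral_comp_sub_left (a := 0) (b := 1)
    (fun x => f x * betaWeight β α x) 1
  simp only [sub_zero, sub_self, betaWeight, sub_sub_cancel] at h
  simp only [betaWeight, ← h]
  congr 1 with x
  ring

lemma betaMeasure_eq_withDensity (α β : ℝ) :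
    betaMeasure α β = (volume.restrict (Ioo 0 1)).withDensity fun x =>
      ENNReal.ofReal (betaWeight α β x / ∫ y in Ioo 0 1, betaWeight α β y) :=
  rfl

lemma integral_betaMeasure (α β : ℝ) (f : ℝ → ℝ) :
    ∫ x, f x ∂betaMeasure α β =
      (∫ x in Ioo 0 1, f x * betaWeight α β x) / ∫ x in Ioo 0 1, betaWeight α β x := by
  have hN : 0 ≤ ∫ x in Ioo (0 : ℝ) 1, betaWeight α β x :=
    setIntegral_nonneg measurableSet_Ioo fun x hx => (betaWeight_pos hx).le
  rw [betaMeasure_eq_withDensity, integral_withDensity_eq_integral_toReal_smul (by fun_prop)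
    (ae_of_all _ fun _ => ENNReal.ofReal_lt_top), ← integral_div]
  refine setIntegral_congr_fun measurableSet_Ioo fun x hx => ?_
  rw [ENNReal.toReal_ofReal (div_nonneg (betaWeight_pos hx).le hN), smul_eq_mul]
  ring

lemma isProbabilityMeasure_betaMeasure (hα : 0 < α) (hβ : 0 < β) :
    IsProbabilityMeasure (betaMeasure α β) := by
  constructor
  have hw := integrableOn_betaWeight hα hβ
  rw [betaMeasure_eq_withDensity, withDensity_apply _ MeasurableSet.univ, Measure.restrict_univ,
    ← ofReal_integral_eq_lintegral_ofReal (hw.div_const _), integral_div,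
    div_self (setIntegral_betaWeight_pos hα hβ).ne', ENNReal.ofReal_one]
  exact (ae_restrict_iff' measurableSet_Ioo).2 (ae_of_all _ fun x hx =>
    div_nonneg (betaWeight_pos hx).le (setIntegral_betaWeight_pos hα hβ).le)

lemma ae_mem_Icc_betaMeasure (α β : ℝ) : ∀ᵐ x ∂betaMeasure α β, x ∈ Icc (0 : ℝ) 1 :=
  (withDensity_absolutelyContinuous _ _).ae_le
    ((ae_restrict_mem measurableSet_Ioo).mono fun _ hx => Ioo_subset_Icc_self hx)

lemma integral_betaMeasure_eq_integral_comp_one_sub (α β : ℝ) (f : ℝ → ℝ) :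
    ∫ x, f x ∂betaMeasure α β = ∫ x, f (1 - x) ∂betaMeasure β α := by
  have hN := setIntegral_comp_one_sub_mul_betaWeight (α := β) (β := α) fun _ => 1
  simp only [one_mul] at hN
  rw [integral_betaMeasure, integral_betaMeasure, hN, setIntegral_comp_one_sub_mul_betaWeight]

lemma rpow_mul_one_sub_rpow_eq {x : ℝ} (hx : x ∈ Ioo (0 : ℝ) 1) :
    x ^ α * (1 - x) ^ β = x * (1 - x) * betaWeight α β x := by
  rw [betaWeight, rpow_sub_one hx.1.ne', rpow_sub_one (sub_pos.2 hx.2).ne']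
  field_simp [hx.1.ne', (sub_pos.2 hx.2).ne']

lemma hasDerivAt_rpow_mul_one_sub_rpow {x : ℝ} (hx : x ∈ Ioo (0 : ℝ) 1) :
    HasDerivAt (fun y => y ^ α * (1 - y) ^ β)
      ((α * (1 - x) - β * x) * betaWeight α β x) x := by
  have h1 : HasDerivAt (fun y => y ^ α) (α * x ^ (α - 1)) x :=
    Real.hasDerivAt_rpow_const (Or.inl hx.1.ne')
  have h2 : HasDerivAt (fun y => (1 - y) ^ β) ((β * (1 - x) ^ (β - 1)) * (-1)) x :=
    (Real.hasDerivAt_rpow_const (Or.inl (sub_pos.2 hx.2).ne')).comp x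
      ((hasDerivAt_id x).const_sub 1)
  refine (h1.mul h2).congr_deriv ?_
  rw [betaWeight, rpow_sub_one hx.1.ne', rpow_sub_one (sub_pos.2 hx.2).ne']
  field_simp [hx.1.ne', (sub_pos.2 hx.2).ne']
  ring

theorem integral_betaMeasure_stein (hα : 0 < α) (hβ : 0 < β) {f f' : ℝ → ℝ}
    (hf : ∀ x, HasDerivAt f (f' x) x) (hf' : ContinuousOn f' (Icc 0 1)) :
    ∫ x, (x * (1 - x) * f' x + (α - (α + β) * x) * f x) ∂betaMeasure α β = 0 := by
  have hfc : Continuous f := continuous_iff_continuousAt.2 fun x => (hf x).continuousAt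
  have hF : ∀ x ∈ Ioo (0 : ℝ) 1, HasDerivAt (fun y => f y * (y ^ α * (1 - y) ^ β))
      ((x * (1 - x) * f' x + (α - (α + β) * x) * f x) * betaWeight α β x) x := by
    intro x hx
    refine ((hf x).mul (hasDerivAt_rpow_mul_one_sub_rpow hx)).congr_deriv ?_
    rw [rpow_mul_one_sub_rpow_eq hx]
    ring
  have hint : IntegrableOn
      (fun x => (x * (1 - x) * f' x + (α - (α + β) * x) * f x) * betaWeight α β x) (Ioo 0 1) :=
    integrableOn_mul_betaWeight hα hβ (by fun_prop)
  rw [integral_betaMeasure, div_eq_zero_iff, ← integral_Ioc_eq_integral_Ioo,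
    ← intervalIntegral.integral_of_le zero_le_one,
    intervalIntegral.integral_eq_sub_of_hasDeriv_right_of_le zero_le_one _
      (fun x hx => (hF x hx).hasDerivWithinAt)
      ((intervalIntegrable_iff_integrableOn_Ioo_of_le zero_le_one).2 hint)]
  · simp [zero_rpow hα.ne', zero_rpow hβ.ne']
  · exact (hfc.mul ((continuous_rpow_const hα.le).mul
      ((continuous_rpow_const hβ.le).comp (continuous_const.sub continuous_id)))).continuousOn

lemma integrable_exp_mul_betaMeasure (hα : 0 < α) (hβ : 0 < β) (t : ℝ) :
    Integrable (fun x => exp (t * x)) (betaMeasure α β) := by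
  have := isProbabilityMeasure_betaMeasure hα hβ
  exact integrable_exp_mul_of_mem_Icc measurable_id.aemeasurable
    (ae_mem_Icc_betaMeasure α β)

lemma mem_interior_integrableExpSet_betaMeasure (hα : 0 < α) (hβ : 0 < β) (t : ℝ) :
    t ∈ interior (integrableExpSet id (betaMeasure α β)) := by
  have h : integrableExpSet id (betaMeasure α β) = univ :=
    eq_univ_of_forall (integrable_exp_mul_betaMeasure hα hβ)
  simp [h]

lemma betaMeasure_stein_mgf (hα : 0 < α) (hβ : 0 < β) (t : ℝ) :
    t * ∫ x, x * exp (t * x) ∂betaMeasure α β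
      - t * ∫ x, x ^ 2 * exp (t * x) ∂betaMeasure α β
      + α * mgf id (betaMeasure α β) t
      - (α + β) * ∫ x, x * exp (t * x) ∂betaMeasure α β = 0 := by
  have hI (n : ℕ) : Integrable (fun x : ℝ => x ^ n * exp (t * x)) (betaMeasure α β) :=
    integrable_pow_mul_exp_of_mem_interior_integrableExpSet
      (mem_interior_integrableExpSet_betaMeasure hα hβ t) n
  have hstein := integral_betaMeasure_stein hα hβ (f := fun x => exp (t * x))
    (f' := fun x => t * exp (t * x)) (fun x => by simpa [mul_comm] using
      ((hasDerivAt_id x).const_mul t).exp) (by fun_prop)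
  have hsplit : (fun x => x * (1 - x) * (t * exp (t * x)) + (α - (α + β) * x) * exp (t * x)) =
      fun x => t * (x ^ 1 * exp (t * x)) - t * (x ^ 2 * exp (t * x))
        + α * (x ^ 0 * exp (t * x)) - (α + β) * (x ^ 1 * exp (t * x)) := by
    ext x
    ring
  rw [hsplit, integral_sub, integral_add, integral_sub, integral_const_mul, integral_const_mul,
    integral_const_mul, integral_const_mul] at hstein
  · simpa [mgf] using hstein
  all_goals fun_prop

lemma betaMeasure_stein_cgf (hα : 0 < α) (hβ : 0 < β) (t : ℝ) :
    t * deriv (cgf id (betaMeasure α β)) t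
      - t * (iteratedDeriv 2 (cgf id (betaMeasure α β)) t
        + deriv (cgf id (betaMeasure α β)) t ^ 2)
      + α - (α + β) * deriv (cgf id (betaMeasure α β)) t = 0 := by
  have := isProbabilityMeasure_betaMeasure hα hβ
  have hmem := mem_interior_integrableExpSet_betaMeasure hα hβ t
  have hM := mgf_pos (X := id) (integrable_exp_mul_betaMeasure hα hβ t)
  rw [iteratedDeriv_two_cgf hmem, sub_add_cancel, deriv_cgf hmem]
  field_simp
  simp only [id]
  linear_combination betaMeasure_stein_mgf hα hβ t

lemma deriv_cgf_betaMeasure_zero (hα : 0 < α) (hβ : 0 < β) :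
    deriv (cgf id (betaMeasure α β)) 0 = α / (α + β) := by
  have h := betaMeasure_stein_cgf hα hβ 0
  rw [eq_div_iff (add_pos hα hβ).ne']
  linarith

lemma integral_id_betaMeasure (hα : 0 < α) (hβ : 0 < β) :
    ∫ x, x ∂betaMeasure α β = α / (α + β) := by
  have := isProbabilityMeasure_betaMeasure hα hβ
  rw [← deriv_cgf_betaMeasure_zero hα hβ,
    deriv_cgf_zero (mem_interior_integrableExpSet_betaMeasure hα hβ 0)]
  simp

lemma iteratedDeriv_two_cgf_betaMeasure_lt (hα : 0 < α) (hβ : 0 < β) {t : ℝ} (ht : 0 < t)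
    (hg : α / (α + β) + t / (4 * (α + β + 1)) < deriv (cgf id (betaMeasure α β)) t) :
    iteratedDeriv 2 (cgf id (betaMeasure α β)) t < 1 / (4 * (α + β + 1)) := by
  have hs := betaMeasure_stein_cgf hα hβ t
  set g := deriv (cgf id (betaMeasure α β)) t
  set v := iteratedDeriv 2 (cgf id (betaMeasure α β)) t
  have hc : 0 < α + β := add_pos hα hβ
  have hcg : α + (α + β) * t / (4 * (α + β + 1)) < (α + β) * g := by
    have := mul_lt_mul_of_pos_left hg hc
    rwa [mul_add, mul_div_cancel₀ _ hc.ne', ← mul_div_assoc] at this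
  have hquarter : g - g ^ 2 ≤ 1 / 4 := by nlinarith [sq_nonneg (g - 1 / 2)]
  refine lt_of_mul_lt_mul_left ?_ ht.le
  calc t * v = t * (g - g ^ 2) + (α - (α + β) * g) := by linarith
    _ < t * (1 / 4) - (α + β) * t / (4 * (α + β + 1)) := by
      nlinarith [mul_le_mul_of_nonneg_left hquarter ht.le]
    _ = t * (1 / (4 * (α + β + 1))) := by
      field_simp
      ring

lemma deriv_cgf_betaMeasure_le (hα : 0 < α) (hβ : 0 < β) {t : ℝ} (ht : 0 ≤ t) :
    deriv (cgf id (betaMeasure α β)) t ≤ α / (α + β) + t / (4 * (α + β + 1)) := by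
  refine le_of_forall_pos_le_add fun ε hε => ?_
  have hG (s : ℝ) := hasDerivAt_deriv_cgf (mem_interior_integrableExpSet_betaMeasure hα hβ s)
  have hB (s : ℝ) : HasDerivAt (fun s => α / (α + β) + s / (4 * (α + β + 1)) + ε)
      (1 / (4 * (α + β + 1))) s := by
    simpa using (((hasDerivAt_id s).div_const (4 * (α + β + 1))).const_add
      (α / (α + β))).add_const ε
  refine image_le_of_deriv_right_lt_deriv_boundary
    (fun s _ => (hG s).continuousAt.continuousWithinAt) (fun s _ => (hG s).hasDerivWithinAt)
    (by rw [deriv_cgf_betaMeasure_zero hα hβ, zero_div, add_zero]; linarith) hB ?_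
    ⟨ht, le_rfl⟩
  intro s hs hGs
  rcases hs.1.eq_or_lt with rfl | hs0
  · rw [deriv_cgf_betaMeasure_zero hα hβ, zero_div, add_zero] at hGs
    linarith
  · exact iteratedDeriv_two_cgf_betaMeasure_lt hα hβ hs0 (by linarith)

lemma cgf_betaMeasure_le (hα : 0 < α) (hβ : 0 < β) {t : ℝ} (ht : 0 ≤ t) :
    cgf id (betaMeasure α β) t ≤ α / (α + β) * t + t ^ 2 / (8 * (α + β + 1)) := by
  have := isProbabilityMeasure_betaMeasure hα hβ
  have hK (s : ℝ) :
      HasDerivAt (cgf id (betaMeasure α β)) (deriv (cgf id (betaMeasure α β)) s) s :=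
    (analyticAt_cgf
      (mem_interior_integrableExpSet_betaMeasure hα hβ s)).differentiableAt.hasDerivAt
  have hB (s : ℝ) : HasDerivAt (fun s => α / (α + β) * s + s ^ 2 / (8 * (α + β + 1)))
      (α / (α + β) + s / (4 * (α + β + 1))) s := by
    refine (((hasDerivAt_id s).const_mul _).add ((hasDerivAt_pow 2 s).div_const _)).congr_deriv ?_
    field_simp
    ring
  exact image_le_of_deriv_right_le_deriv_boundary
    (fun s _ => (hK s).continuousAt.continuousWithinAt) (fun s _ => (hK s).hasDerivWithinAt)
    (by simp [cgf_zero]) (fun s _ => (hB s).continuousAt.continuousWithinAt)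
    (fun s _ => (hB s).hasDerivWithinAt) (fun s hs => deriv_cgf_betaMeasure_le hα hβ hs.1)
    ⟨ht, le_rfl⟩

lemma integral_exp_mul_sub_betaMeasure_le (hα : 0 < α) (hβ : 0 < β) {l : ℝ} (hl : 0 ≤ l) :
    ∫ x, exp (l * (x - α / (α + β))) ∂betaMeasure α β ≤
      exp (l ^ 2 / (8 * (α + β + 1))) := by
  have := isProbabilityMeasure_betaMeasure hα hβ
  have hsplit : (fun x => exp (l * (x - α / (α + β)))) =
      fun x => exp (l * x) * exp (-(α / (α + β) * l)) := by
    ext x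
    rw [← exp_add]
    ring_nf
  calc ∫ x, exp (l * (x - α / (α + β))) ∂betaMeasure α β
      = exp (cgf id (betaMeasure α β) l) * exp (-(α / (α + β) * l)) := by
        rw [hsplit, integral_mul_const,
          exp_cgf (X := id) (integrable_exp_mul_betaMeasure hα hβ l)]
        rfl
    _ ≤ exp (α / (α + β) * l + l ^ 2 / (8 * (α + β + 1))) * exp (-(α / (α + β) * l)) := by
        gcongr
        exact cgf_betaMeasure_le hα hβ hl
    _ = exp (l ^ 2 / (8 * (α + β + 1))) := by
        rw [← exp_add]
        ring_nf

end

/-- Let `α, β > 0` and `X ~ Beta(α, β)`. Then `X − E[X]` is `σ²`-sub-Gaussian with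
`σ² = 1/(4(α+β+1))`: for every `λ ∈ ℝ`,
`E[exp(λ(X − E[X]))] ≤ exp(λ²/(8(α+β+1)))`. -/
theorem beta_subGaussian {α β : ℝ} (hα : 0 < α) (hβ : 0 < β) (l : ℝ) :
    ∫ x, Real.exp (l * (x - ∫ y, y ∂(betaMeasure α β))) ∂(betaMeasure α β) ≤
      Real.exp (l ^ 2 / (8 * (α + β + 1))) := by
  rw [integral_id_betaMeasure hα hβ]
  rcases le_or_gt 0 l with hl | hl
  · exact integral_exp_mul_sub_betaMeasure_le hα hβ hl
  have h := integral_exp_mul_sub_betaMeasure_le hβ hα (neg_nonneg.2 hl.le)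
  rw [neg_sq, add_comm β α] at h
  rw [integral_betaMeasure_eq_integral_comp_one_sub]
  convert h using 4 with x
  field_simp
  ring
end

section
/- Let M and M' be two finite-horizon MDPs on the same finite state space 𝒳 and finite action space 𝒜 with the same horizon h ≥ 1 and the same initial distribution ρ, where M has mean rewards R_M : 𝒳×𝒜 → [0,1] and transition probabilities T_M, and M' has mean rewards R_{M'} : 𝒳×𝒜 → ℝ and transition probabilities T_{M'}. Then for any policy π = (π¹,…,π^h) with each πⁱ : 𝒳 → 𝒜, V_{M'}(π) − V_M(π) ≤ E'[ Σ_{i=1}^{h} ( R_{M'}(X_i, A_i) − R_M(X_i, A_i) + h · ‖T_{M'}(X_i, A_i) − T_M(X_i, A_i)‖₁ ) ], where the expectation E' is over the trajectory (X_1, A_1, …, X_h, A_h) generated by following π in M', i.e., X_1 ~ ρ, A_i = πⁱ(X_i), and X_{i+1} distributed according to T_{M'}(X_i, A_i). -/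
open Finset

/-- Expected total "reward" `Σ_{j=i}^{i+k-1} g(X_j, A_j)` over the remaining `k` steps of a
trajectory started at state `x` at step `i`, following policy `π` in the Markov chain with
transition probabilities `T`; rewards are given by `g`. -/
noncomputable def stepValue {𝒳 𝒜 : Type*} [Fintype 𝒳] (g : 𝒳 → 𝒜 → ℝ)
    (T : 𝒳 → 𝒜 → 𝒳 → ℝ) (π : ℕ → 𝒳 → 𝒜) : ℕ → ℕ → 𝒳 → ℝ
  | _, 0, _ => 0
  | i, k + 1, x =>
      g x (π i x) + ∑ y, T x (π i x) y * stepValue g T π (i + 1) k y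

/-- The value `V_M(π)`: the expected total reward over a trajectory of length `h` with
`X₁ ~ ρ`, `A_i = πⁱ(X_i)` and `X_{i+1} ~ T(X_i, A_i)`. -/
noncomputable def value {𝒳 𝒜 : Type*} [Fintype 𝒳] (ρ : 𝒳 → ℝ) (g : 𝒳 → 𝒜 → ℝ)
    (T : 𝒳 → 𝒜 → 𝒳 → ℝ) (π : ℕ → 𝒳 → 𝒜) (h : ℕ) : ℝ :=
  ∑ x, ρ x * stepValue g T π 1 h x

lemma stepValue_nonneg {𝒳 𝒜 : Type*} [Fintype 𝒳] (g : 𝒳 → 𝒜 → ℝ)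
    (T : 𝒳 → 𝒜 → 𝒳 → ℝ) (π : ℕ → 𝒳 → 𝒜)
    (hg : ∀ x a, 0 ≤ g x a) (hT0 : ∀ x a y, 0 ≤ T x a y) :
    ∀ k i x, 0 ≤ stepValue g T π i k x := by
  intro k
  induction k with
  | zero => intro i x; simp [stepValue]
  | succ k ih =>
    intro i x
    rw [stepValue]
    have : 0 ≤ ∑ y, T x (π i x) y * stepValue g T π (i + 1) k y :=
      Finset.sum_nonneg fun y _ => mul_nonneg (hT0 _ _ _) (ih _ _)
    linarith [hg x (π i x)]

lemma stepValue_le {𝒳 𝒜 : Type*} [Fintype 𝒳] (g : 𝒳 → 𝒜 → ℝ)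
    (T : 𝒳 → 𝒜 → 𝒳 → ℝ) (π : ℕ → 𝒳 → 𝒜)
    (hg : ∀ x a, g x a ≤ 1) (hT0 : ∀ x a y, 0 ≤ T x a y)
    (hT1 : ∀ x a, ∑ y, T x a y = 1) :
    ∀ k i x, stepValue g T π i k x ≤ k := by
  intro k
  induction k with
  | zero => intro i x; simp [stepValue]
  | succ k ih =>
    intro i x
    rw [stepValue]
    have h1 : ∑ y, T x (π i x) y * stepValue g T π (i + 1) k y ≤
        ∑ y, T x (π i x) y * k := by
      refine Finset.sum_le_sum fun y _ => ?_
      exact mul_le_mul_of_nonneg_left (ih _ _) (hT0 _ _ _)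
    have h2 : ∑ y, T x (π i x) y * (k : ℝ) = k := by
      rw [← Finset.sum_mul, hT1, one_mul]
    push_cast
    linarith [hg x (π i x)]

/-- For finite-horizon MDPs `M = (R, T)` and `M' = (R', T')` on common finite state and
action spaces, with horizon `h ≥ 1` and common initial distribution `ρ`, and any policy
`π`: `V_{M'}(π) − V_M(π) ≤ E'[Σ_{i=1}^h (R'(X_i,A_i) − R(X_i,A_i)
+ h ‖T'(X_i,A_i) − T(X_i,A_i)‖₁)]`, where `E'` is over the trajectory generated by `π`
in `M'`. -/
theorem mdp_value_difference_le {𝒳 𝒜 : Type*} [Fintype 𝒳] [Fintype 𝒜]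
    [Nonempty 𝒳] [Nonempty 𝒜] {h : ℕ} (hh : 1 ≤ h)
    (ρ : 𝒳 → ℝ) (hρ0 : ∀ x, 0 ≤ ρ x) (hρ1 : ∑ x, ρ x = 1)
    (R : 𝒳 → 𝒜 → ℝ) (hR : ∀ x a, R x a ∈ Set.Icc (0 : ℝ) 1)
    (R' : 𝒳 → 𝒜 → ℝ)
    (T T' : 𝒳 → 𝒜 → 𝒳 → ℝ)
    (hT0 : ∀ x a y, 0 ≤ T x a y) (hT1 : ∀ x a, ∑ y, T x a y = 1)
    (hT'0 : ∀ x a y, 0 ≤ T' x a y) (hT'1 : ∀ x a, ∑ y, T' x a y = 1)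
    (π : ℕ → 𝒳 → 𝒜) :
    value ρ R' T' π h - value ρ R T π h ≤
      value ρ
        (fun x a => R' x a - R x a + h * ∑ y, |T' x a y - T x a y|)
        T' π h := by
  set g : 𝒳 → 𝒜 → ℝ :=
    fun x a => R' x a - R x a + h * ∑ y, |T' x a y - T x a y| with hg
  have key : ∀ k, k ≤ h → ∀ i x,
      stepValue R' T' π i k x - stepValue R T π i k x ≤ stepValue g T' π i k x := by
    intro k
    induction k with
    | zero => intro _ i x; simp [stepValue]
    | succ k ih =>
      intro hk i x
      have hk' : k ≤ h := Nat.le_of_succ_le hk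
      set a := π i x
      have hVle : ∀ y, stepValue R T π (i + 1) k y ≤ k :=
        fun y => stepValue_le R T π (fun x a => (hR x a).2) hT0 hT1 k _ y
      have hV0 : ∀ y, 0 ≤ stepValue R T π (i + 1) k y :=
        fun y => stepValue_nonneg R T π (fun x a => (hR x a).1) hT0 k _ y
      rw [stepValue, stepValue, stepValue]
      have e1 : ∑ y, T' x a y * stepValue R' T' π (i + 1) k y
          - ∑ y, T x a y * stepValue R T π (i + 1) k y
          = (∑ y, T' x a y * (stepValue R' T' π (i + 1) k y - stepValue R T π (i + 1) k y))
          + ∑ y, (T' x a y - T x a y) * stepValue R T π (i + 1) k y := by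
        rw [← Finset.sum_add_distrib, ← Finset.sum_sub_distrib]
        congr 1; ext y; ring
      have b1 : ∑ y, T' x a y * (stepValue R' T' π (i + 1) k y - stepValue R T π (i + 1) k y)
          ≤ ∑ y, T' x a y * stepValue g T' π (i + 1) k y := by
        refine Finset.sum_le_sum fun y _ => ?_
        exact mul_le_mul_of_nonneg_left (ih hk' (i + 1) y) (hT'0 _ _ _)
      have b2 : ∑ y, (T' x a y - T x a y) * stepValue R T π (i + 1) k y
          ≤ (h : ℝ) * ∑ y, |T' x a y - T x a y| := by
        calc ∑ y, (T' x a y - T x a y) * stepValue R T π (i + 1) k y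
            ≤ ∑ y, |T' x a y - T x a y| * (h : ℝ) := by
              refine Finset.sum_le_sum fun y _ => ?_
              calc (T' x a y - T x a y) * stepValue R T π (i + 1) k y
                  ≤ |T' x a y - T x a y| * stepValue R T π (i + 1) k y :=
                    mul_le_mul_of_nonneg_right (le_abs_self _) (hV0 y)
                _ ≤ |T' x a y - T x a y| * (h : ℝ) := by
                    refine mul_le_mul_of_nonneg_left ?_ (abs_nonneg _)
                    exact (hVle y).trans (by exact_mod_cast hk')
          _ = (h : ℝ) * ∑ y, |T' x a y - T x a y| := by
              rw [← Finset.sum_mul]; ring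
      have : g x a = R' x a - R x a + h * ∑ y, |T' x a y - T x a y| := rfl
      linarith
  have keyh := fun x => key h le_rfl 1 x
  unfold value
  rw [← Finset.sum_sub_distrib]
  refine Finset.sum_le_sum fun x _ => ?_
  calc ρ x * stepValue R' T' π 1 h x - ρ x * stepValue R T π 1 h x
      = ρ x * (stepValue R' T' π 1 h x - stepValue R T π 1 h x) := by ring
    _ ≤ ρ x * stepValue g T' π 1 h x :=
        mul_le_mul_of_nonneg_left (keyh x) (hρ0 x)
end

section
/- Let 𝒳 and 𝒜 be finite nonempty sets, let n, h ≥ 1 be integers, and let (x_{t,i}, a_{t,i}) ∈ 𝒳×𝒜 for t = 1,…,n and i = 1,…,h be an arbitrary doubly indexed sequence of state-action pairs. For each pair (x,a) let N_t(x,a) = Σ_{ℓ=1}^{t−1} Σ_{i=1}^{h} 1{x_{ℓ,i} = x, a_{ℓ,i} = a}. Let Λ > 0 and suppose Λ_R(x,a) ≥ Λ and Λ_T(x,a) ≥ Λ for all (x,a). Define β_t(x,a) = √( 2 log(2|𝒳||𝒜|n) / (Λ_R(x,a) + N_t(x,a) + 1) ) + √( 4|𝒳| log(4|𝒳||𝒜|n)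 / (Λ_T(x,a) + N_t(x,a) + 1) ). Then h · Σ_{t=1}^{n} Σ_{i=1}^{h} min{1, β_t(x_{t,i}, a_{t,i})} ≤ 4|𝒳| h √( 2|𝒜| n h · log(4|𝒳||𝒜|n) · log(1 + n h / (2|𝒳||𝒜|Λ)) ) + 2|𝒳||𝒜| h². -/
open Finset Real

/-!
The width `β_t(p)` is at most `√(C / (Λ + N_t(p) + 1))` with `C = 16 |𝒳| log (4 |𝒳| |𝒜| n)`.
Since an episode visits a pair at most `h` times, the `m`-th visit to a pair overall happens
with a count `N ≥ m - h`, so the visits to a pair contribute at most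
`h + Σ_{m < K} min 1 √(C / (Λ + m + 1)) ≤ h + √C · √(K log (1 + K / Λ))`, where `K` is its total
number of visits. Cauchy–Schwarz over the pairs, `Σ K = n h` and Jensen's inequality for `log`
bound the sum of these square roots by `√(n h · |𝒳||𝒜| log (1 + n h / (|𝒳||𝒜| Λ)))`.
-/

lemma log_one_add_le_two_mul_log_one_add_half {u : ℝ} (hu : 0 ≤ u) :
    log (1 + u) ≤ 2 * log (1 + u / 2) := by
  have h2 : log ((1 + u / 2) ^ 2) = 2 * log (1 + u / 2) := by simp
  rw [← h2]
  exact log_le_log (by linarith) (by nlinarith)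

lemma sum_inv_le_log_one_add {Λ : ℝ} (hΛ : 0 < Λ) (K : ℕ) :
    ∑ m ∈ range K, (Λ + m + 1)⁻¹ ≤ log (1 + K / Λ) := by
  induction K with
  | zero => simp
  | succ K ih =>
    have hstep : (Λ + K + 1)⁻¹ ≤ log (1 + (K + 1) / Λ) - log (1 + K / Λ) := by
      rw [← log_div (by positivity) (by positivity)]
      convert one_sub_inv_le_log_of_pos (x := (1 + (K + 1) / Λ) / (1 + K / Λ)) (by positivity)
        using 1
      field_simp
      ring
    rw [sum_range_succ]
    push_cast
    linarith

lemma sum_min_one_sqrt_div_le {Λ C : ℝ} (hΛ : 0 < Λ) (hC : 0 ≤ C) (K : ℕ) :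
    ∑ m ∈ range K, min 1 √(C / (Λ + m + 1)) ≤ √C * √(K * log (1 + K / Λ)) := by
  calc ∑ m ∈ range K, min 1 √(C / (Λ + m + 1))
      ≤ ∑ m ∈ range K, √1 * √(C / (Λ + m + 1)) := by
        gcongr with m
        simp
    _ ≤ √(∑ _m ∈ range K, 1) * √(∑ m ∈ range K, C / (Λ + m + 1)) :=
        sum_sqrt_mul_sqrt_le _ (fun _ => zero_le_one) (fun _ => by positivity)
    _ = √K * √(C * ∑ m ∈ range K, (Λ + m + 1)⁻¹) := by simp [div_eq_mul_inv, mul_sum]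
    _ ≤ √K * √(C * log (1 + K / Λ)) := by gcongr; exact sum_inv_le_log_one_add hΛ K
    _ = √C * √(K * log (1 + K / Λ)) := by
        rw [sqrt_mul hC, sqrt_mul (Nat.cast_nonneg K)]
        ring

lemma sum_log_le_card_mul_log_mean {ι : Type*} (s : Finset ι) {z : ι → ℝ}
    (hz : ∀ i ∈ s, 0 < z i) :
    ∑ i ∈ s, log (z i) ≤ #s * log ((∑ i ∈ s, z i) / #s) := by
  rcases s.eq_empty_or_nonempty with rfl | hs
  · simp
  have hcard : (0 : ℝ) < #s := by exact_mod_cast hs.card_pos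
  have hjensen := strictConcaveOn_log_Ioi.concaveOn.le_map_sum (t := s)
    (w := fun _ => (#s : ℝ)⁻¹) (p := z) (fun _ _ => by positivity)
    (by simp [hcard.ne']) hz
  simp only [smul_eq_mul, ← mul_sum] at hjensen
  calc ∑ i ∈ s, log (z i) = #s * ((#s : ℝ)⁻¹ * ∑ i ∈ s, log (z i)) := by field_simp
    _ ≤ #s * log ((∑ i ∈ s, z i) / #s) := by
        rw [div_eq_inv_mul]
        gcongr

lemma sum_sqrt_mul_log_le {ι : Type*} (s : Finset ι) {K : ι → ℝ} (hK : ∀ i, 0 ≤ K i)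
    {Λ : ℝ} (hΛ : 0 ≤ Λ) :
    ∑ i ∈ s, √(K i * log (1 + K i / Λ))
      ≤ √((∑ i ∈ s, K i) * (#s * log (1 + (∑ i ∈ s, K i) / (#s * Λ)))) := by
  have hlog : ∀ i, 0 ≤ log (1 + K i / Λ) := fun i =>
    log_nonneg (le_add_of_nonneg_right (div_nonneg (hK i) hΛ))
  have hjensen : ∑ i ∈ s, log (1 + K i / Λ) ≤ #s * log (1 + (∑ i ∈ s, K i) / (#s * Λ)) := by
    refine (sum_log_le_card_mul_log_mean s fun i _ => by have := hK i; positivity).trans_eq ?_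
    rcases eq_or_ne (#s : ℝ) 0 with hs | hs
    · simp [hs]
    · congr 2
      rw [sum_add_distrib, ← sum_div]
      field_simp
      simp
  calc ∑ i ∈ s, √(K i * log (1 + K i / Λ))
      = ∑ i ∈ s, √(K i) * √(log (1 + K i / Λ)) := by simp_rw [sqrt_mul (hK _)]
    _ ≤ √(∑ i ∈ s, K i) * √(∑ i ∈ s, log (1 + K i / Λ)) := sum_sqrt_mul_sqrt_le s hK hlog
    _ ≤ _ := by
        rw [sqrt_mul (sum_nonneg fun i _ => hK i)]
        gcongr

lemma sum_Ico_mul_le_sum_range_sub {g : ℕ → ℝ} (hg : Antitone g) {c : ℕ → ℕ} {h : ℕ}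
    (hc : ∀ t, c t ≤ h) {a n : ℕ} (han : a ≤ n) :
    ∑ t ∈ Ico a n, c t * g (∑ l ∈ Ico a t, c l)
      ≤ ∑ m ∈ range (∑ l ∈ Ico a n, c l), g (m - h) := by
  induction n, han using Nat.le_induction with
  | base => simp
  | succ n han ih =>
    set N := ∑ l ∈ Ico a n, c l
    -- term `k` of the new block is term `N + k` overall, and `N + k - h ≤ N` as `k < c n ≤ h`
    have hlast : c n * g N ≤ ∑ k ∈ range (c n), g (N + k - h) := by
      calc c n * g N = ∑ _k ∈ range (c n), g N := by simp
        _ ≤ _ := sum_le_sum fun k hk => hg (by have := hc n; simp at hk; omega)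
    rw [sum_Ico_succ_top han, sum_Ico_succ_top han, sum_range_add]
    exact add_le_add ih hlast

lemma sum_range_sub_le {g : ℕ → ℝ} (hg : ∀ m, 0 ≤ g m) (h K : ℕ) :
    ∑ m ∈ range K, g (m - h) ≤ h * g 0 + ∑ m ∈ range K, g m := by
  calc ∑ m ∈ range K, g (m - h) ≤ ∑ m ∈ range (h + K), g (m - h) :=
        sum_le_sum_of_subset_of_nonneg (range_mono (by omega)) fun _ _ _ => hg _
    _ = h * g 0 + ∑ m ∈ range K, g m := by
        rw [sum_range_add,
          sum_congr rfl fun m hm => by rw [Nat.sub_eq_zero_of_le (mem_range.1 hm).le]]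
        simp

section Visits

variable {α : Type*} [DecidableEq α] (y : ℕ → ℕ → α) (h : ℕ)

def visits (t : ℕ) (p : α) : ℕ := #{i ∈ Icc 1 h | y t i = p}

/-- The count `N_t(p)` of visits to `p` in the episodes `1, …, t - 1`. -/
def visitCount (t : ℕ) (p : α) : ℕ := ∑ l ∈ Ico 1 t, visits y h l p

lemma visits_le (t : ℕ) (p : α) : visits y h t p ≤ h :=
  (card_filter_le _ _).trans (by simp)

lemma sum_visits_mul_le {g : ℕ → ℝ} (hg : Antitone g) (hg0 : ∀ m, 0 ≤ g m) (n : ℕ) (p : α) :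
    ∑ t ∈ Icc 1 n, visits y h t p * g (visitCount y h t p)
      ≤ h * g 0 + ∑ m ∈ range (visitCount y h (n + 1) p), g m := by
  rw [← Ico_add_one_right_eq_Icc]
  exact (sum_Ico_mul_le_sum_range_sub hg (visits_le y h · p) (by omega)).trans
    (sum_range_sub_le hg0 _ _)

variable [Fintype α]

lemma sum_visits (t : ℕ) : ∑ p, visits y h t p = h := by
  simp [visits, ← card_eq_sum_card_fiberwise]

lemma sum_visitCount (n : ℕ) : ∑ p, visitCount y h (n + 1) p = n * h := by
  simp only [visitCount]
  rw [sum_comm]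
  simp [sum_visits]

lemma sum_sum_eq_sum_visits_mul (n : ℕ) (f : ℕ → α → ℝ) :
    ∑ t ∈ Icc 1 n, ∑ i ∈ Icc 1 h, f t (y t i) = ∑ p, ∑ t ∈ Icc 1 n, visits y h t p * f t p := by
  conv_rhs => rw [sum_comm]
  refine sum_congr rfl fun t _ => ?_
  rw [← sum_fiberwise' (Icc 1 h) (y t)]
  simp [visits]

lemma sum_min_one_sqrt_div_visitCount_le {Λ C : ℝ} (hΛ : 0 < Λ) (hC : 0 ≤ C) (n : ℕ) :
    ∑ t ∈ Icc 1 n, ∑ i ∈ Icc 1 h, min 1 √(C / (Λ + visitCount y h t (y t i) + 1))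
      ≤ Fintype.card α * h + √C * √(n * h * (Fintype.card α *
          log (1 + n * h / (Fintype.card α * Λ)))) := by
  set g : ℕ → ℝ := fun m => min 1 √(C / (Λ + m + 1))
  have hg : Antitone g := fun m m' hmm' => by
    simp only [g]
    gcongr
  have hg0 : ∀ m, 0 ≤ g m := fun m => le_min zero_le_one (sqrt_nonneg _)
  set K : α → ℕ := visitCount y h (n + 1)
  have hK : ∑ p, (K p : ℝ) = n * h := by exact_mod_cast sum_visitCount y h n
  calc _ = ∑ p, ∑ t ∈ Icc 1 n, visits y h t p * g (visitCount y h t p) :=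
        sum_sum_eq_sum_visits_mul y h n fun t p => g (visitCount y h t p)
    _ ≤ ∑ p, (h + √C * √(K p * log (1 + K p / Λ))) := by
        gcongr with p
        refine (sum_visits_mul_le y h hg hg0 n p).trans
          (add_le_add ?_ (sum_min_one_sqrt_div_le hΛ hC _))
        exact mul_le_of_le_one_right (Nat.cast_nonneg h) (min_le_left _ _)
    _ = Fintype.card α * h + √C * ∑ p, √(K p * log (1 + K p / Λ)) := by
        simp [sum_add_distrib, mul_sum]
    _ ≤ _ := by
        gcongr
        simpa [hK] using sum_sqrt_mul_log_le univ (fun p => Nat.cast_nonneg (K p)) hΛ.le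

end Visits

lemma sqrt_div_add_sqrt_div_le {a b c d D : ℝ} (ha : 0 ≤ a) (hab : a ≤ b) (hD : 0 < D)
    (hc : D ≤ c) (hd : D ≤ d) : √(a / c) + √(b / d) ≤ √(4 * b / D) := by
  have hb : √(b / d) ≤ √(b / D) := by gcongr; linarith
  have ha : √(a / c) ≤ √(b / D) := by gcongr; linarith
  have h4 : √(4 * b / D) = 2 * √(b / D) := by
    rw [mul_div_assoc, sqrt_mul zero_le_four, show (4 : ℝ) = 2 ^ 2 by norm_num,
      sqrt_sq zero_le_two]
  linarith

lemma confidence_width_le {X A n Λ Λ₁ Λ₂ : ℝ} (k : ℕ) (hX : 1 ≤ X) (hXAn : 1 ≤ X * A * n)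
    (hΛ : 0 ≤ Λ) (hΛ₁ : Λ ≤ Λ₁) (hΛ₂ : Λ ≤ Λ₂) :
    √(2 * log (2 * X * A * n) / (Λ₁ + k + 1)) + √(4 * X * log (4 * X * A * n) / (Λ₂ + k + 1))
      ≤ √(16 * X * log (4 * X * A * n) / (Λ + k + 1)) := by
  have hlog₂ : 0 ≤ log (2 * X * A * n) := log_nonneg (by linarith)
  have hlog : log (2 * X * A * n) ≤ log (4 * X * A * n) := log_le_log (by linarith) (by linarith)
  have := sqrt_div_add_sqrt_div_le (by linarith) (by nlinarith : 2 * log (2 * X * A * n)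
    ≤ 4 * X * log (4 * X * A * n)) (by positivity)
    (by linarith : Λ + k + 1 ≤ Λ₁ + k + 1) (by linarith : Λ + k + 1 ≤ Λ₂ + k + 1)
  rwa [← mul_assoc, ← mul_assoc, show (4 : ℝ) * 4 = 16 by norm_num] at this

theorem sum_confidence_widths_le_general {𝒳 𝒜 : Type*} [Fintype 𝒳] [Fintype 𝒜]
    [DecidableEq 𝒳] [DecidableEq 𝒜] [Nonempty 𝒳] [Nonempty 𝒜]
    {n h : ℕ} (hn : 1 ≤ n)
    (x : ℕ → ℕ → 𝒳) (a : ℕ → ℕ → 𝒜)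
    (N : ℕ → 𝒳 → 𝒜 → ℕ)
    (hN : ∀ t p q, N t p q =
      ∑ l ∈ Finset.Ico 1 t, ∑ i ∈ Finset.Icc 1 h,
        if x l i = p ∧ a l i = q then 1 else 0)
    (Λ : ℝ) (hΛ : 0 < Λ)
    (ΛR ΛT : 𝒳 → 𝒜 → ℝ) (hΛR : ∀ p q, Λ ≤ ΛR p q) (hΛT : ∀ p q, Λ ≤ ΛT p q)
    (β : ℕ → 𝒳 → 𝒜 → ℝ)
    (hβ : ∀ t p q, β t p q =
      Real.sqrt (2 * Real.log (2 * Fintype.card 𝒳 * Fintype.card 𝒜 * n) /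
          (ΛR p q + N t p q + 1)) +
        Real.sqrt (4 * Fintype.card 𝒳 *
            Real.log (4 * Fintype.card 𝒳 * Fintype.card 𝒜 * n) /
          (ΛT p q + N t p q + 1))) :
    (h : ℝ) * ∑ t ∈ Finset.Icc 1 n, ∑ i ∈ Finset.Icc 1 h,
        min 1 (β t (x t i) (a t i)) ≤
      4 * Fintype.card 𝒳 * h *
          Real.sqrt (2 * Fintype.card 𝒜 * n * h *
            Real.log (4 * Fintype.card 𝒳 * Fintype.card 𝒜 * n) *
            Real.log (1 + n * h / (2 * Fintype.card 𝒳 * Fintype.card 𝒜 * Λ))) +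
        2 * Fintype.card 𝒳 * Fintype.card 𝒜 * h ^ 2 := by
  set X : ℝ := (Fintype.card 𝒳 : ℝ)
  set A : ℝ := (Fintype.card 𝒜 : ℝ)
  set L := log (4 * X * A * n)
  set L' := log (1 + n * h / (2 * X * A * Λ))
  set y : ℕ → ℕ → 𝒳 × 𝒜 := fun l i => (x l i, a l i)
  have hX : 1 ≤ X := Nat.one_le_cast.2 Fintype.card_pos
  have hXAn : 1 ≤ X * A * n := one_le_mul_of_one_le_of_one_le
    (one_le_mul_of_one_le_of_one_le hX (Nat.one_le_cast.2 Fintype.card_pos)) (mod_cast hn)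
  have hL : 0 ≤ L := log_nonneg (by linarith)
  have hβ_le : ∀ t p q, β t p q ≤ √(16 * X * L / (Λ + visitCount y h t (p, q) + 1)) := by
    intro t p q
    have hN_eq : N t p q = visitCount y h t (p, q) := by simp [hN, visitCount, visits, y]
    rw [hβ, hN_eq]
    exact confidence_width_le _ hX hXAn hΛ.le (hΛR p q) (hΛT p q)
  have hsum := (sum_le_sum fun t _ => sum_le_sum fun i _ =>
    min_le_min_left 1 (hβ_le t (x t i) (a t i))).trans
      (sum_min_one_sqrt_div_visitCount_le y h hΛ (C := 16 * X * L) (by positivity) n)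
  rw [show (Fintype.card (𝒳 × 𝒜) : ℝ) = X * A by simp [X, A]] at hsum
  have hlog : log (1 + n * h / (X * A * Λ)) ≤ 2 * L' := by
    convert log_one_add_le_two_mul_log_one_add_half (u := n * h / (X * A * Λ)) (by positivity)
      using 3
    field_simp
  have hsqrt : √(16 * X * L) * √(n * h * (X * A * (2 * L')))
      = 4 * X * √(2 * A * n * h * L * L') := by
    rw [← sqrt_mul (by positivity), show 16 * X * L * (n * h * (X * A * (2 * L')))
      = (4 * X) ^ 2 * (2 * A * n * h * L * L') by ring, sqrt_mul (by positivity),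
      sqrt_sq (by positivity)]
  calc (h : ℝ) * ∑ t ∈ Icc 1 n, ∑ i ∈ Icc 1 h, min 1 (β t (x t i) (a t i))
      ≤ h * (X * A * h + √(16 * X * L) * √(n * h * (X * A * (2 * L')))) := by
        gcongr
        exact hsum.trans (by gcongr)
    _ ≤ _ := by
        rw [hsqrt]
        nlinarith [show 0 ≤ X * A * h ^ 2 by positivity]

/-- Let `𝒳, 𝒜` be finite nonempty sets, `n, h ≥ 1`, and `(x_{t,i}, a_{t,i})` an arbitrary
doubly indexed sequence of state-action pairs with visit counts
`N_t(x,a) = Σ_{ℓ=1}^{t−1} Σ_{i=1}^{h} 1{x_{ℓ,i}=x, a_{ℓ,i}=a}`. Let `Λ > 0` with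
`Λ_R(x,a) ≥ Λ` and `Λ_T(x,a) ≥ Λ` for all `(x,a)`, and set
`β_t(x,a) = √(2 log(2|𝒳||𝒜|n)/(Λ_R(x,a)+N_t(x,a)+1))
  + √(4|𝒳| log(4|𝒳||𝒜|n)/(Λ_T(x,a)+N_t(x,a)+1))`. Then
`h Σ_{t=1}^n Σ_{i=1}^h min{1, β_t(x_{t,i},a_{t,i})}
  ≤ 4|𝒳| h √(2|𝒜| n h log(4|𝒳||𝒜|n) log(1 + n h/(2|𝒳||𝒜|Λ))) + 2|𝒳||𝒜| h²`. -/
theorem sum_confidence_widths_le {𝒳 𝒜 : Type*} [Fintype 𝒳] [Fintype 𝒜]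
    [DecidableEq 𝒳] [DecidableEq 𝒜] [Nonempty 𝒳] [Nonempty 𝒜]
    {n h : ℕ} (hn : 1 ≤ n) (hh : 1 ≤ h)
    (x : ℕ → ℕ → 𝒳) (a : ℕ → ℕ → 𝒜)
    (N : ℕ → 𝒳 → 𝒜 → ℕ)
    (hN : ∀ t p q, N t p q =
      ∑ l ∈ Finset.Ico 1 t, ∑ i ∈ Finset.Icc 1 h,
        if x l i = p ∧ a l i = q then 1 else 0)
    (Λ : ℝ) (hΛ : 0 < Λ)
    (ΛR ΛT : 𝒳 → 𝒜 → ℝ) (hΛR : ∀ p q, Λ ≤ ΛR p q) (hΛT : ∀ p q, Λ ≤ ΛT p q)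
    (β : ℕ → 𝒳 → 𝒜 → ℝ)
    (hβ : ∀ t p q, β t p q =
      Real.sqrt (2 * Real.log (2 * Fintype.card 𝒳 * Fintype.card 𝒜 * n) /
          (ΛR p q + N t p q + 1)) +
        Real.sqrt (4 * Fintype.card 𝒳 *
            Real.log (4 * Fintype.card 𝒳 * Fintype.card 𝒜 * n) /
          (ΛT p q + N t p q + 1))) :
    (h : ℝ) * ∑ t ∈ Finset.Icc 1 n, ∑ i ∈ Finset.Icc 1 h,
        min 1 (β t (x t i) (a t i)) ≤
      4 * Fintype.card 𝒳 * h *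
          Real.sqrt (2 * Fintype.card 𝒜 * n * h *
            Real.log (4 * Fintype.card 𝒳 * Fintype.card 𝒜 * n) *
            Real.log (1 + n * h / (2 * Fintype.card 𝒳 * Fintype.card 𝒜 * Λ))) +
        2 * Fintype.card 𝒳 * Fintype.card 𝒜 * h ^ 2 :=
  sum_confidence_widths_le_general hn x a N hN Λ hΛ ΛR ΛT hΛR hΛT β hβ
end
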